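/- arXiv:1702.00760 — 5 statements merged into one kernel-verified Lean document; each statement's English description precedes it below -/
import Mathlib

section
/- Let α > -1/2 and γ ∈ ℝ be fixed, and for 0 ≤ B ≤ 1 define I(B) = ∫_{-1}^{1} (1 - B s)^γ (1 - s²)^{α - 1/2} ds. Then uniformly in 0 ≤ B < 1: if α + γ + 1/2 < 0 there are constants c, C > 0 with c·(1-B)^{α+γ+1/2} ≤ I(B) ≤ C·(1-B)^{α+γ+1/2}; if α + γ + 1/2 = 0 then c·(1 + log(1/(1-B))) ≤ I(B) ≤ C·(1 + log(1/(1-B))); and if α + γ + 1/2 > 0 then c ≤ I(B) ≤ C. -/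
/-!
Write `A = α - 1/2` and `δ = 1 - B`. On `[-1, 0]` the factors `1 - B s` and `1 - s` lie in
`[1, 2]`, so the integrand is comparable to `(1 + s)^A`. On `[0, 1]` the factor `1 + s` lies in
`[1, 2]`, while `1 - B s` is comparable to `1 - s` for `s ≤ B` and to `δ` for `s ≥ B`. Splitting the
integral at `0` and `B` gives, uniformly in `B`,
`I(B) ≍ 1 + ∫₀^B (1 - s)^(γ + A) ds + δ^(γ + A + 1)`,
and the middle integral is of order `δ^(γ + A + 1)`, `log (1/δ)` or `1` according to the sign of
`γ + A + 1`. Here `≍` is `IsTheta` along `𝓟 (Ico 0 1)`, and for integrands along the set of pairs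
`(B, s)` with `s` in the relevant piece.
-/

open Asymptotics Filter Set MeasureTheory intervalIntegral

namespace Asymptotics

section Principal

variable {α : Type*} {s : Set α} {f g : α → ℝ}

theorem isTheta_principal_of_bounds {c C : ℝ} (hc : 0 < c) (hg : ∀ x ∈ s, 0 ≤ g x)
    (hlo : ∀ x ∈ s, c * g x ≤ f x) (hhi : ∀ x ∈ s, f x ≤ C * g x) : f =Θ[𝓟 s] g := by
  have hf : ∀ x ∈ s, 0 ≤ f x := fun x hx => (mul_nonneg hc.le (hg x hx)).trans (hlo x hx)
  refine ⟨isBigO_principal.2 ⟨C, fun x hx => ?_⟩, isBigO_principal.2 ⟨c⁻¹, fun x hx => ?_⟩⟩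
  · rw [Real.norm_of_nonneg (hf x hx), Real.norm_of_nonneg (hg x hx)]
    exact hhi x hx
  · rw [Real.norm_of_nonneg (hf x hx), Real.norm_of_nonneg (hg x hx), le_inv_mul_iff₀ hc]
    exact hlo x hx

theorem isTheta_principal_rpow_of_bounds {c C : ℝ} (r : ℝ) (hc : 0 < c)
    (hg : ∀ x ∈ s, 0 ≤ g x) (hlo : ∀ x ∈ s, c * g x ≤ f x) (hhi : ∀ x ∈ s, f x ≤ C * g x) :
    (fun x => f x ^ r) =Θ[𝓟 s] fun x => g x ^ r :=
  (isTheta_principal_of_bounds hc hg hlo hhi).rpow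
    (eventually_principal.2 fun x hx => (mul_nonneg hc.le (hg x hx)).trans (hlo x hx))
    (eventually_principal.2 hg)

theorem IsTheta.exists_bounds_of_nonneg (h : f =Θ[𝓟 s] g) (hf : ∀ x ∈ s, 0 ≤ f x)
    (hg : ∀ x ∈ s, 0 ≤ g x) :
    ∃ c C : ℝ, 0 < c ∧ 0 < C ∧ ∀ x ∈ s, c * g x ≤ f x ∧ f x ≤ C * g x := by
  obtain ⟨C, hC, hfg⟩ := h.1.exists_pos
  obtain ⟨c, hc, hgf⟩ := h.2.exists_pos
  rw [isBigOWith_principal] at hfg hgf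
  refine ⟨c⁻¹, C, inv_pos.2 hc, hC, fun x hx => ⟨?_, ?_⟩⟩
  · have := hgf x hx
    rw [Real.norm_of_nonneg (hf x hx), Real.norm_of_nonneg (hg x hx)] at this
    rwa [inv_mul_le_iff₀ hc]
  · simpa only [Real.norm_of_nonneg (hf x hx), Real.norm_of_nonneg (hg x hx)] using hfg x hx

end Principal

theorem IsBigO.add_of_nonneg {α : Type*} {l : Filter α} {f₁ f₂ g₁ g₂ : α → ℝ}
    (h₁ : f₁ =O[l] g₁) (h₂ : f₂ =O[l] g₂) (hg₁ : 0 ≤ᶠ[l] g₁) (hg₂ : 0 ≤ᶠ[l] g₂) :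
    (fun x => f₁ x + f₂ x) =O[l] fun x => g₁ x + g₂ x := by
  refine (h₁.add_add h₂).trans (IsBigO.of_bound' ?_)
  filter_upwards [hg₁, hg₂] with x hx₁ hx₂
  rw [Real.norm_of_nonneg hx₁, Real.norm_of_nonneg hx₂]

theorem IsTheta.add_of_nonneg {α : Type*} {l : Filter α} {f₁ f₂ g₁ g₂ : α → ℝ}
    (h₁ : f₁ =Θ[l] g₁) (h₂ : f₂ =Θ[l] g₂) (hf₁ : 0 ≤ᶠ[l] f₁) (hf₂ : 0 ≤ᶠ[l] f₂)
    (hg₁ : 0 ≤ᶠ[l] g₁) (hg₂ : 0 ≤ᶠ[l] g₂) :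
    (fun x => f₁ x + f₂ x) =Θ[l] fun x => g₁ x + g₂ x :=
  ⟨h₁.1.add_of_nonneg h₂.1 hg₁ hg₂, h₁.2.add_of_nonneg h₂.2 hf₁ hf₂⟩

end Asymptotics

section ParametricIntegral

variable {ι : Type*} {S : Set ι} {a b : ι → ℝ} {f g : ι → ℝ → ℝ}

def parametricIoc (S : Set ι) (a b : ι → ℝ) : Set (ι × ℝ) :=
  {p | p.1 ∈ S ∧ p.2 ∈ Ioc (a p.1) (b p.1)}

theorem intervalIntegrable_of_isBigO (hab : ∀ i ∈ S, a i ≤ b i)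
    (hf : ∀ i ∈ S, AEStronglyMeasurable (f i))
    (hg : ∀ i ∈ S, IntervalIntegrable (g i) volume (a i) (b i))
    (h : (fun p : ι × ℝ => f p.1 p.2) =O[𝓟 (parametricIoc S a b)] fun p => g p.1 p.2) :
    ∀ i ∈ S, IntervalIntegrable (f i) volume (a i) (b i) := by
  obtain ⟨c, hc⟩ := isBigO_principal.1 h
  intro i hi
  refine ((hg i hi).norm.const_mul c).mono_fun' (hf i hi).restrict ?_
  rw [EventuallyLE, uIoc_of_le (hab i hi), ae_restrict_iff' measurableSet_Ioc]
  exact ae_of_all _ fun s hs => hc (i, s) ⟨hi, hs⟩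

theorem isBigO_intervalIntegral (hab : ∀ i ∈ S, a i ≤ b i)
    (hg : ∀ i ∈ S, IntervalIntegrable (g i) volume (a i) (b i))
    (hg₀ : ∀ p ∈ parametricIoc S a b, 0 ≤ g p.1 p.2)
    (h : (fun p : ι × ℝ => f p.1 p.2) =O[𝓟 (parametricIoc S a b)] fun p => g p.1 p.2) :
    (fun i => ∫ s in a i..b i, f i s) =O[𝓟 S] fun i => ∫ s in a i..b i, g i s := by
  obtain ⟨c, hc⟩ := isBigO_principal.1 h
  refine isBigO_principal.2 ⟨c, fun i hi => ?_⟩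
  have hg_int : 0 ≤ ∫ s in a i..b i, g i s := by
    rw [integral_of_le (hab i hi)]
    exact setIntegral_nonneg measurableSet_Ioc fun s hs => hg₀ (i, s) ⟨hi, hs⟩
  calc ‖∫ s in a i..b i, f i s‖ ≤ ∫ s in a i..b i, c * g i s :=
        norm_integral_le_of_norm_le (hab i hi) (ae_of_all _ fun s hs => by
          simpa only [Real.norm_of_nonneg (hg₀ (i, s) ⟨hi, hs⟩)] using hc (i, s) ⟨hi, hs⟩)
          ((hg i hi).const_mul c)
    _ = c * ‖∫ s in a i..b i, g i s‖ := by
        rw [intervalIntegral.integral_const_mul, Real.norm_of_nonneg hg_int]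

theorem isTheta_intervalIntegral (hab : ∀ i ∈ S, a i ≤ b i)
    (hf : ∀ i ∈ S, IntervalIntegrable (f i) volume (a i) (b i))
    (hg : ∀ i ∈ S, IntervalIntegrable (g i) volume (a i) (b i))
    (hf₀ : ∀ p ∈ parametricIoc S a b, 0 ≤ f p.1 p.2)
    (hg₀ : ∀ p ∈ parametricIoc S a b, 0 ≤ g p.1 p.2)
    (h : (fun p : ι × ℝ => f p.1 p.2) =Θ[𝓟 (parametricIoc S a b)] fun p => g p.1 p.2) :
    (fun i => ∫ s in a i..b i, f i s) =Θ[𝓟 S] fun i => ∫ s in a i..b i, g i s :=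
  ⟨isBigO_intervalIntegral hab hg hg₀ h.1,
    isBigO_intervalIntegral hab hf hf₀ h.2⟩

end ParametricIntegral

theorem intervalIntegrable_one_sub_rpow {r a b : ℝ} (hr : -1 < r) :
    IntervalIntegrable (fun s : ℝ => (1 - s) ^ r) volume a b := by
  simpa using (intervalIntegrable_rpow' hr (a := 1 - a) (b := 1 - b)).comp_sub_left 1

theorem intervalIntegrable_one_sub_rpow_of_lt_one {r a b : ℝ} (ha : a < 1) (hb : b < 1) :
    IntervalIntegrable (fun s : ℝ => (1 - s) ^ r) volume a b := by
  refine ContinuousOn.intervalIntegrable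
    ((continuousOn_const.sub continuousOn_id).rpow_const fun s hs => Or.inl ?_)
  exact (sub_pos.2 (hs.2.trans_lt (sup_lt_iff.2 ⟨ha, hb⟩))).ne'

theorem intervalIntegrable_one_add_rpow {r a b : ℝ} (hr : -1 < r) :
    IntervalIntegrable (fun s : ℝ => (1 + s) ^ r) volume a b := by
  simpa using (intervalIntegrable_rpow' hr (a := a + 1) (b := b + 1)).comp_add_left 1

theorem integral_one_sub_rpow {r a b : ℝ} (h : -1 < r ∨ r ≠ -1 ∧ (0 : ℝ) ∉ uIcc (1 - b) (1 - a)) :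
    ∫ s in a..b, (1 - s) ^ r = ((1 - a) ^ (r + 1) - (1 - b) ^ (r + 1)) / (r + 1) := by
  rw [integral_comp_sub_left (fun x => x ^ r), integral_rpow h]

noncomputable def powerKernel (γ A B s : ℝ) : ℝ := (1 - B * s) ^ γ * (1 - s ^ 2) ^ A

noncomputable def powerKernelProfile (p B : ℝ) : ℝ :=
  1 + (∫ s in (0 : ℝ)..B, (1 - s) ^ p) + (1 - B) ^ (p + 1)

section PowerKernel

variable {γ A B s : ℝ}

theorem powerKernel_eq_mul (hs : s ∈ Icc (-1) 1) :
    powerKernel γ A B s = (1 - B * s) ^ γ * ((1 - s) ^ A * (1 + s) ^ A) := by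
  rw [powerKernel, ← Real.mul_rpow (by linarith [hs.2]) (by linarith [hs.1])]
  ring_nf

theorem powerKernel_nonneg (hB : B ∈ Icc 0 1) (hs : s ∈ Icc (-1) 1) :
    0 ≤ powerKernel γ A B s := by
  obtain ⟨hs₁, hs₂⟩ := hs
  have : B * s ≤ 1 := by nlinarith [mul_le_mul_of_nonneg_left hs₂ hB.1, hB.2]
  exact mul_nonneg (Real.rpow_nonneg (by linarith) _) (Real.rpow_nonneg (by nlinarith) _)

theorem integral_powerKernel_nonneg (hB : B ∈ Icc 0 1) {c d : ℝ} (hc : -1 ≤ c) (hcd : c ≤ d)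
    (hd : d ≤ 1) : 0 ≤ ∫ s in c..d, powerKernel γ A B s :=
  intervalIntegral.integral_nonneg hcd fun _ hs =>
    powerKernel_nonneg hB ⟨hc.trans hs.1, hs.2.trans hd⟩

theorem measurable_powerKernel : Measurable (powerKernel γ A B) := by
  unfold powerKernel
  fun_prop

theorem powerKernel_isTheta_left :
    (fun p : ℝ × ℝ => powerKernel γ A p.1 p.2)
      =Θ[𝓟 (parametricIoc (Ico 0 1) (fun _ => -1) fun _ => 0)] fun p => (1 + p.2) ^ A := by
  set D := parametricIoc (Ico (0 : ℝ) 1) (fun _ => -1) fun _ => 0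
  have hbase : (fun p : ℝ × ℝ => (1 - p.1 * p.2) ^ γ) =Θ[𝓟 D] fun _ => (1 : ℝ) ^ γ :=
    isTheta_principal_rpow_of_bounds γ one_pos (fun _ _ => zero_le_one)
      (fun p ⟨⟨hB₀, _⟩, _, hs₂⟩ => by nlinarith) (C := 2)
      (fun p ⟨⟨hB₀, hB₁⟩, hs₁, _⟩ => by nlinarith)
  have hleft : (fun p : ℝ × ℝ => (1 - p.2) ^ A) =Θ[𝓟 D] fun _ => (1 : ℝ) ^ A :=
    isTheta_principal_rpow_of_bounds A one_pos (fun _ _ => zero_le_one)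
      (fun p ⟨_, _, hs₂⟩ => by linarith) (C := 2) (fun p ⟨_, hs₁, _⟩ => by linarith)
  refine (EventuallyEq.trans_isTheta ?_
    (hbase.mul (hleft.mul (isTheta_refl (fun p : ℝ × ℝ => (1 + p.2) ^ A) _)))).trans_eventuallyEq ?_
  · exact eventually_principal.2 fun p ⟨_, hs₁, hs₂⟩ => powerKernel_eq_mul ⟨hs₁.le, by linarith⟩
  · exact eventually_principal.2 fun p _ => by simp

theorem powerKernel_isTheta_mid :
    (fun p : ℝ × ℝ => powerKernel γ A p.1 p.2)
      =Θ[𝓟 (parametricIoc (Ico 0 1) (fun _ => 0) fun B => B)] fun p => (1 - p.2) ^ (γ + A) := by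
  set D := parametricIoc (Ico (0 : ℝ) 1) (fun _ => 0) fun B => B
  have hbase : (fun p : ℝ × ℝ => (1 - p.1 * p.2) ^ γ) =Θ[𝓟 D] fun p => (1 - p.2) ^ γ :=
    isTheta_principal_rpow_of_bounds γ one_pos (fun p ⟨⟨_, hB₁⟩, _, hs₂⟩ => by linarith)
      (fun p ⟨⟨_, hB₁⟩, hs₁, _⟩ => by nlinarith) (C := 2)
      (fun p ⟨⟨hB₀, hB₁⟩, hs₁, hs₂⟩ => by nlinarith)
  have hright : (fun p : ℝ × ℝ => (1 + p.2) ^ A) =Θ[𝓟 D] fun _ => (1 : ℝ) ^ A :=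
    isTheta_principal_rpow_of_bounds A one_pos (fun _ _ => zero_le_one)
      (fun p ⟨_, hs₁, _⟩ => by linarith) (C := 2) (fun p ⟨⟨_, hB₁⟩, _, hs₂⟩ => by linarith)
  refine (EventuallyEq.trans_isTheta ?_ (hbase.mul
    ((isTheta_refl (fun p : ℝ × ℝ => (1 - p.2) ^ A) _).mul hright))).trans_eventuallyEq ?_
  · exact eventually_principal.2 fun p ⟨⟨_, hB₁⟩, hs₁, hs₂⟩ =>
      powerKernel_eq_mul ⟨by linarith, by linarith⟩
  · refine eventually_principal.2 fun p ⟨⟨_, hB₁⟩, _, hs₂⟩ => ?_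
    simp only [Real.one_rpow, mul_one, ← Real.rpow_add (by linarith : (0 : ℝ) < 1 - p.2)]

theorem powerKernel_isTheta_right :
    (fun p : ℝ × ℝ => powerKernel γ A p.1 p.2)
      =Θ[𝓟 (parametricIoc (Ico 0 1) (fun B => B) fun _ => 1)]
        fun p => (1 - p.1) ^ γ * (1 - p.2) ^ A := by
  set D := parametricIoc (Ico (0 : ℝ) 1) (fun B => B) fun _ => 1
  have hbase : (fun p : ℝ × ℝ => (1 - p.1 * p.2) ^ γ) =Θ[𝓟 D] fun p => (1 - p.1) ^ γ :=
    isTheta_principal_rpow_of_bounds γ one_pos (fun p ⟨⟨_, hB₁⟩, _⟩ => by linarith)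
      (fun p ⟨⟨hB₀, _⟩, _, hs₂⟩ => by nlinarith) (C := 2)
      (fun p ⟨⟨hB₀, hB₁⟩, hs₁, hs₂⟩ => by nlinarith)
  have hright : (fun p : ℝ × ℝ => (1 + p.2) ^ A) =Θ[𝓟 D] fun _ => (1 : ℝ) ^ A :=
    isTheta_principal_rpow_of_bounds A one_pos (fun _ _ => zero_le_one)
      (fun p ⟨⟨hB₀, _⟩, hs₁, _⟩ => by linarith) (C := 2) (fun p ⟨_, _, hs₂⟩ => by linarith)
  refine (EventuallyEq.trans_isTheta ?_ (hbase.mul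
    ((isTheta_refl (fun p : ℝ × ℝ => (1 - p.2) ^ A) _).mul hright))).trans_eventuallyEq ?_
  · exact eventually_principal.2 fun p ⟨⟨hB₀, _⟩, hs₁, hs₂⟩ =>
      powerKernel_eq_mul ⟨by linarith, hs₂⟩
  · exact eventually_principal.2 fun p _ => by simp

theorem intervalIntegrable_powerKernel (hA : -1 < A) (hB : B ∈ Ico 0 1) {c d : ℝ}
    (hc : c ∈ Icc (-1) 1) (hd : d ∈ Icc (-1) 1) :
    IntervalIntegrable (powerKernel γ A B) volume c d := by
  have hf : ∀ B ∈ Ico (0 : ℝ) 1, AEStronglyMeasurable (powerKernel γ A B) :=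
    fun _ _ => measurable_powerKernel.aestronglyMeasurable
  have hleft := intervalIntegrable_of_isBigO (a := fun _ => -1) (b := fun _ => 0)
    (g := fun _ s => (1 + s) ^ A) (fun _ _ => by norm_num) hf
    (fun _ _ => intervalIntegrable_one_add_rpow hA) powerKernel_isTheta_left.1 B hB
  have hmid := intervalIntegrable_of_isBigO (a := fun _ => 0) (b := fun B => B)
    (g := fun _ s => (1 - s) ^ (γ + A)) (fun B hB => hB.1) hf
    (fun B hB => intervalIntegrable_one_sub_rpow_of_lt_one one_pos hB.2)
    powerKernel_isTheta_mid.1 B hB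
  have hright := intervalIntegrable_of_isBigO (a := fun B => B) (b := fun _ => 1)
    (g := fun B s => (1 - B) ^ γ * (1 - s) ^ A) (fun B hB => hB.2.le) hf
    (fun _ _ => (intervalIntegrable_one_sub_rpow hA).const_mul _)
    powerKernel_isTheta_right.1 B hB
  exact (hleft.trans (hmid.trans hright)).mono_set
    (uIcc_subset_uIcc (Icc_subset_uIcc hc) (Icc_subset_uIcc hd))

theorem integral_powerKernel_left_isTheta (hA : -1 < A) :
    (fun B => ∫ s in (-1 : ℝ)..0, powerKernel γ A B s) =Θ[𝓟 (Ico 0 1)] fun _ => (1 : ℝ) := by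
  have hval : ∫ s in (-1 : ℝ)..0, (1 + s) ^ A = (A + 1)⁻¹ := by
    rw [integral_comp_add_left (fun x => x ^ A), integral_rpow (Or.inl hA)]
    norm_num [Real.zero_rpow (by linarith : A + 1 ≠ 0)]
  have h := isTheta_intervalIntegral (a := fun _ => -1) (b := fun _ => 0) (f := powerKernel γ A)
    (g := fun _ s => (1 + s) ^ A) (fun _ _ => by norm_num)
    (fun B hB => intervalIntegrable_powerKernel hA hB (by norm_num) (by norm_num))
    (fun _ _ => intervalIntegrable_one_add_rpow hA)
    (fun p ⟨hB, hs₁, hs₂⟩ => powerKernel_nonneg ⟨hB.1, hB.2.le⟩ ⟨hs₁.le, by linarith⟩)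
    (fun p ⟨_, hs₁, _⟩ => Real.rpow_nonneg (by linarith) _) powerKernel_isTheta_left
  simp only [hval] at h
  exact h.trans (isTheta_const_const (inv_ne_zero (by linarith)) one_ne_zero)

theorem integral_powerKernel_mid_isTheta (hA : -1 < A) :
    (fun B => ∫ s in (0 : ℝ)..B, powerKernel γ A B s)
      =Θ[𝓟 (Ico 0 1)] fun B => ∫ s in (0 : ℝ)..B, (1 - s) ^ (γ + A) :=
  isTheta_intervalIntegral (a := fun _ => 0) (b := fun B => B)
    (g := fun _ s => (1 - s) ^ (γ + A)) (fun B hB => hB.1)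
    (fun B hB => intervalIntegrable_powerKernel hA hB (by norm_num) ⟨by linarith [hB.1], hB.2.le⟩)
    (fun B hB => intervalIntegrable_one_sub_rpow_of_lt_one one_pos hB.2)
    (fun p ⟨hB, hs₁, hs₂⟩ => powerKernel_nonneg ⟨hB.1, hB.2.le⟩ ⟨by linarith, by linarith [hB.2]⟩)
    (fun p ⟨hB, _, hs₂⟩ => Real.rpow_nonneg (by linarith [hB.2]) _) powerKernel_isTheta_mid

theorem integral_powerKernel_right_isTheta (hA : -1 < A) :
    (fun B => ∫ s in B..1, powerKernel γ A B s) =Θ[𝓟 (Ico 0 1)] fun B => (1 - B) ^ (γ + A + 1) := by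
  have h := isTheta_intervalIntegral (a := fun B => B) (b := fun _ => 1)
    (g := fun B s => (1 - B) ^ γ * (1 - s) ^ A) (fun B hB => hB.2.le)
    (fun B hB => intervalIntegrable_powerKernel hA hB ⟨by linarith [hB.1], hB.2.le⟩ (by norm_num))
    (fun _ _ => (intervalIntegrable_one_sub_rpow hA).const_mul _)
    (fun p ⟨hB, hs₁, hs₂⟩ => powerKernel_nonneg ⟨hB.1, hB.2.le⟩ ⟨by linarith [hB.1], hs₂⟩)
    (fun p ⟨hB, _, hs₂⟩ => mul_nonneg (Real.rpow_nonneg (by linarith [hB.2]) _)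
      (Real.rpow_nonneg (by linarith) _)) powerKernel_isTheta_right
  refine h.trans_eventuallyEq (eventually_principal.2 fun B hB => ?_) |>.trans
    ((isTheta_const_mul_left (inv_ne_zero (by linarith : A + 1 ≠ 0))).2 isTheta_rfl)
  have hδ : 0 < 1 - B := by linarith [hB.2]
  dsimp only
  rw [intervalIntegral.integral_const_mul, integral_one_sub_rpow (Or.inl hA), sub_self,
    Real.zero_rpow (by linarith), sub_zero,
    add_assoc γ, Real.rpow_add hδ γ (A + 1)]
  ring

theorem integral_powerKernel_isTheta (hA : -1 < A) :
    (fun B => ∫ s in (-1 : ℝ)..1, powerKernel γ A B s) =Θ[𝓟 (Ico 0 1)]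
      powerKernelProfile (γ + A) := by
  have hsplit : ∀ B ∈ Ico (0 : ℝ) 1, ∫ s in (-1 : ℝ)..1, powerKernel γ A B s =
      (∫ s in (-1 : ℝ)..0, powerKernel γ A B s) + (∫ s in (0 : ℝ)..B, powerKernel γ A B s)
        + ∫ s in B..1, powerKernel γ A B s := by
    intro B hB
    have hB' : B ∈ Icc (-1 : ℝ) 1 := ⟨by linarith [hB.1], hB.2.le⟩
    have hint := fun {c d : ℝ} (hc : c ∈ Icc (-1 : ℝ) 1) (hd : d ∈ Icc (-1 : ℝ) 1) =>
      intervalIntegrable_powerKernel (γ := γ) hA hB hc hd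
    rw [integral_add_adjacent_intervals (hint (by norm_num) (by norm_num)) (hint (by norm_num) hB'),
      integral_add_adjacent_intervals (hint (by norm_num) hB') (hint hB' (by norm_num))]
  have hleft₀ : ∀ B ∈ Ico (0 : ℝ) 1, 0 ≤ ∫ s in (-1 : ℝ)..0, powerKernel γ A B s :=
    fun B hB => integral_powerKernel_nonneg ⟨hB.1, hB.2.le⟩ le_rfl (by norm_num) (by norm_num)
  have hmid₀ : ∀ B ∈ Ico (0 : ℝ) 1, 0 ≤ ∫ s in (0 : ℝ)..B, powerKernel γ A B s :=
    fun B hB => integral_powerKernel_nonneg ⟨hB.1, hB.2.le⟩ (by norm_num) hB.1 hB.2.le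
  have hright₀ : ∀ B ∈ Ico (0 : ℝ) 1, 0 ≤ ∫ s in B..1, powerKernel γ A B s :=
    fun B hB => integral_powerKernel_nonneg ⟨hB.1, hB.2.le⟩ (by linarith [hB.1]) hB.2.le le_rfl
  have hmid₀' : ∀ B ∈ Ico (0 : ℝ) 1, 0 ≤ ∫ s in (0 : ℝ)..B, (1 - s) ^ (γ + A) :=
    fun B hB => intervalIntegral.integral_nonneg hB.1 fun s hs =>
      Real.rpow_nonneg (by linarith [hs.2, hB.2]) _
  refine EventuallyEq.trans_isTheta (eventually_principal.2 hsplit) ?_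
  unfold powerKernelProfile
  exact ((integral_powerKernel_left_isTheta hA).add_of_nonneg (integral_powerKernel_mid_isTheta hA)
    (eventually_principal.2 hleft₀) (eventually_principal.2 hmid₀)
    (eventually_principal.2 fun _ _ => zero_le_one) (eventually_principal.2 hmid₀')).add_of_nonneg
    (integral_powerKernel_right_isTheta hA)
    (eventually_principal.2 fun B hB => add_nonneg (hleft₀ B hB) (hmid₀ B hB))
    (eventually_principal.2 hright₀)
    (eventually_principal.2 fun B hB => add_nonneg zero_le_one (hmid₀' B hB))
    (eventually_principal.2 fun B hB => Real.rpow_nonneg (by linarith [hB.2]) _)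

end PowerKernel

section Profile

variable {p B : ℝ}

theorem integral_zero_one_sub_rpow (hp : p ≠ -1) (hB : B < 1) :
    ∫ s in (0 : ℝ)..B, (1 - s) ^ p = (1 - (1 - B) ^ (p + 1)) / (p + 1) := by
  rw [integral_one_sub_rpow (Or.inr ⟨hp, notMem_uIcc_of_lt (by linarith) (by norm_num)⟩),
    sub_zero, Real.one_rpow]

theorem integral_zero_one_sub_inv (hB : B < 1) :
    ∫ s in (0 : ℝ)..B, (1 - s) ^ (-1 : ℝ) = Real.log (1 / (1 - B)) := by
  simp only [Real.rpow_neg_one]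
  rw [integral_comp_sub_left (fun x => x⁻¹),
    integral_inv (notMem_uIcc_of_lt (by linarith) (by norm_num)), sub_zero]

theorem powerKernelProfile_isTheta_of_lt (hp : p < -1) :
    powerKernelProfile p =Θ[𝓟 (Ico 0 1)] fun B => (1 - B) ^ (p + 1) := by
  have hk : 0 < (-(p + 1))⁻¹ := inv_pos.2 (by linarith)
  refine isTheta_principal_of_bounds one_pos (fun B hB => Real.rpow_nonneg (by linarith [hB.2]) _)
    (C := 2 + (-(p + 1))⁻¹) (fun B hB => ?_) (fun B hB => ?_) <;>
  · have hX : 1 ≤ (1 - B) ^ (p + 1) := Real.one_le_rpow_of_pos_of_le_one_of_nonpos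
      (by linarith [hB.2]) (by linarith [hB.1]) (by linarith)
    have ht : (1 - (1 - B) ^ (p + 1)) / (p + 1) = ((1 - B) ^ (p + 1) - 1) * (-(p + 1))⁻¹ := by
      rw [div_eq_mul_inv, inv_neg, mul_neg, ← neg_mul, neg_sub]
    rw [powerKernelProfile, integral_zero_one_sub_rpow (by linarith) hB.2, ht]
    nlinarith [mul_nonneg hk.le (sub_nonneg.2 hX)]

theorem powerKernelProfile_isTheta_of_eq (hp : p = -1) :
    powerKernelProfile p =Θ[𝓟 (Ico 0 1)] fun B => 1 + Real.log (1 / (1 - B)) := by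
  subst hp
  have hL : ∀ B ∈ Ico (0 : ℝ) 1, 0 ≤ Real.log (1 / (1 - B)) := fun B hB =>
    Real.log_nonneg (one_le_one_div (by linarith [hB.2]) (by linarith [hB.1]))
  refine isTheta_principal_of_bounds one_pos (fun B hB => by linarith [hL B hB]) (C := 2)
    (fun B hB => ?_) (fun B hB => ?_) <;>
  · rw [powerKernelProfile, integral_zero_one_sub_inv hB.2, neg_add_cancel, Real.rpow_zero]
    linarith [hL B hB]

theorem powerKernelProfile_isTheta_of_gt (hp : -1 < p) :
    powerKernelProfile p =Θ[𝓟 (Ico 0 1)] fun _ => (1 : ℝ) := by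
  have hk : 0 < (p + 1)⁻¹ := inv_pos.2 (by linarith)
  refine isTheta_principal_of_bounds one_pos (fun _ _ => zero_le_one) (C := 2 + (p + 1)⁻¹)
    (fun B hB => ?_) (fun B hB => ?_) <;>
  · have hX₀ : 0 ≤ (1 - B) ^ (p + 1) := Real.rpow_nonneg (by linarith [hB.2]) _
    have hX₁ : (1 - B) ^ (p + 1) ≤ 1 := Real.rpow_le_one (by linarith [hB.2])
      (by linarith [hB.1]) (by linarith)
    rw [powerKernelProfile, integral_zero_one_sub_rpow (by linarith) hB.2, div_eq_mul_inv]
    nlinarith [mul_nonneg hk.le (sub_nonneg.2 hX₁), mul_nonneg hk.le hX₀]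

end Profile

theorem exists_bounds_integral_powerKernel {γ A : ℝ} (hA : -1 < A) {g : ℝ → ℝ}
    (hg : ∀ B ∈ Ico (0 : ℝ) 1, 0 ≤ g B) (h : powerKernelProfile (γ + A) =Θ[𝓟 (Ico 0 1)] g) :
    ∃ c C : ℝ, 0 < c ∧ 0 < C ∧ ∀ B ∈ Ico (0 : ℝ) 1,
      c * g B ≤ ∫ s in (-1 : ℝ)..1, powerKernel γ A B s ∧
      ∫ s in (-1 : ℝ)..1, powerKernel γ A B s ≤ C * g B :=
  ((integral_powerKernel_isTheta hA).trans h).exists_bounds_of_nonneg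
    (fun B hB => integral_powerKernel_nonneg ⟨hB.1, hB.2.le⟩ le_rfl (by norm_num) le_rfl) hg

theorem stmt_0 (α γ : ℝ) (hα : α > -1/2) :
    ∃ c C : ℝ, 0 < c ∧ 0 < C ∧ ∀ B : ℝ, 0 ≤ B → B < 1 →
      (α + γ + 1/2 < 0 →
        c * (1 - B) ^ (α + γ + 1/2) ≤
          (∫ s in (-1:ℝ)..1, (1 - B * s) ^ γ * (1 - s ^ 2) ^ (α - 1/2)) ∧
        (∫ s in (-1:ℝ)..1, (1 - B * s) ^ γ * (1 - s ^ 2) ^ (α - 1/2)) ≤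
          C * (1 - B) ^ (α + γ + 1/2)) ∧
      (α + γ + 1/2 = 0 →
        c * (1 + Real.log (1 / (1 - B))) ≤
          (∫ s in (-1:ℝ)..1, (1 - B * s) ^ γ * (1 - s ^ 2) ^ (α - 1/2)) ∧
        (∫ s in (-1:ℝ)..1, (1 - B * s) ^ γ * (1 - s ^ 2) ^ (α - 1/2)) ≤
          C * (1 + Real.log (1 / (1 - B)))) ∧
      (α + γ + 1/2 > 0 →
        c ≤ (∫ s in (-1:ℝ)..1, (1 - B * s) ^ γ * (1 - s ^ 2) ^ (α - 1/2)) ∧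
        (∫ s in (-1:ℝ)..1, (1 - B * s) ^ γ * (1 - s ^ 2) ^ (α - 1/2)) ≤ C) := by
  have hA : -1 < α - 1/2 := by linarith
  have hT : α + γ + 1/2 = γ + (α - 1/2) + 1 := by ring
  rcases lt_trichotomy (α + γ + 1/2) 0 with hT' | hT' | hT'
  · obtain ⟨c, C, hc, hC, h⟩ := exists_bounds_integral_powerKernel (γ := γ) hA
      (fun B hB => Real.rpow_nonneg (by linarith [hB.2]) _)
      (powerKernelProfile_isTheta_of_lt (by linarith))
    refine ⟨c, C, hc, hC, fun B hB₀ hB₁ =>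
      ⟨fun _ => ?_, fun h' => absurd h' hT'.ne, fun h' => absurd h' hT'.not_gt⟩⟩
    rw [hT]
    exact h B ⟨hB₀, hB₁⟩
  · obtain ⟨c, C, hc, hC, h⟩ := exists_bounds_integral_powerKernel (γ := γ) hA
      (fun B hB => add_nonneg zero_le_one
        (Real.log_nonneg (one_le_one_div (by linarith [hB.2]) (by linarith [hB.1]))))
      (powerKernelProfile_isTheta_of_eq (by linarith))
    exact ⟨c, C, hc, hC, fun B hB₀ hB₁ =>
      ⟨fun h' => absurd h' hT'.not_lt, fun _ => h B ⟨hB₀, hB₁⟩, fun h' => absurd h' hT'.not_gt⟩⟩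
  · obtain ⟨c, C, hc, hC, h⟩ := exists_bounds_integral_powerKernel (γ := γ) hA
      (fun _ _ => zero_le_one) (powerKernelProfile_isTheta_of_gt (by linarith))
    exact ⟨c, C, hc, hC, fun B hB₀ hB₁ =>
      ⟨fun h' => absurd h' hT'.not_gt, fun h' => absurd h' hT'.ne', fun _ => by
        obtain ⟨hlo, hhi⟩ := h B ⟨hB₀, hB₁⟩
        rw [mul_one] at hlo hhi
        exact ⟨hlo, hhi⟩⟩⟩
end

section
/- Let a, b ∈ ℝ and 1 < p ≤ q < ∞ with a - 1/p' = b + 1/q and a < 1/p', where 1/p + 1/p' = 1. Then there is a constant C such that for all nonnegative measurable g on (0,∞): (∫_0^∞ (x^b ∫_0^x g(y) dy)^q dx)^{1/q} ≤ C (∫_0^∞ (x^a g(x))^p dx)^{1/p}. -/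
open MeasureTheory Set
open scoped ENNReal

/-!
Put `δ = 1/p' - a > 0`, `G x = ∫₀ˣ g` and `A = ∫₀^∞ (y^a g)^p`. Hölder's inequality on
`(0, x)` with the weight `y^a` gives `G x ≲ x^δ A^(1/p)`, and with the weight `y^(a + δ/2)` it
gives `G x ^ p ≲ x^(δp/2) ∫₀ˣ y^(δp/2) (y^a g)^p`. Spending the first bound on the factor
`G^(q-p)` of `G^q` and the second on `G^p`, the condition `a - 1/p' = b + 1/q` makes the powers
of `x` collapse to `x^(bq) G^q ≲ A^(q/p - 1) x^(-1-δp/2) ∫₀ˣ y^(δp/2) (y^a g)^p`, and by Tonelli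
the integral of the right-hand side over `x` is a multiple of `A^(q/p - 1) · A`.
-/

lemma lintegral_Ioo_zero_ofReal_rpow {c x : ℝ} (hc : -1 < c) (hx : 0 < x) :
    ∫⁻ y in Ioo 0 x, ENNReal.ofReal (y ^ c) = ENNReal.ofReal (x ^ (c + 1) / (c + 1)) := by
  have hint : IntegrableOn (fun y : ℝ => y ^ c) (Ioo 0 x) := by
    rw [← intervalIntegrable_iff_integrableOn_Ioo_of_le hx.le]
    exact intervalIntegral.intervalIntegrable_rpow' hc
  rw [← ofReal_integral_eq_lintegral_ofReal hint
    (ae_restrict_of_forall_mem measurableSet_Ioo fun y hy => Real.rpow_nonneg hy.1.le c),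
    ← integral_Ioc_eq_integral_Ioo, ← intervalIntegral.integral_of_le hx.le,
    integral_rpow (Or.inl hc), Real.zero_rpow (by linarith), sub_zero]

lemma lintegral_Ioi_ofReal_rpow {c y : ℝ} (hc : c < -1) (hy : 0 < y) :
    ∫⁻ x in Ioi y, ENNReal.ofReal (x ^ c) = ENNReal.ofReal (y ^ (c + 1) / -(c + 1)) := by
  rw [← ofReal_integral_eq_lintegral_ofReal (integrableOn_Ioi_rpow_of_lt hc hy)
    (ae_restrict_of_forall_mem measurableSet_Ioi fun x hx => Real.rpow_nonneg (hy.trans hx).le c),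
    integral_Ioi_rpow_of_lt hc hy, div_neg, neg_div]

lemma lintegral_le_lintegral_mul_rpow_mul_lintegral_inv_rpow {α : Type*} [MeasurableSpace α]
    {μ : Measure α} {p q : ℝ} (hpq : p.HolderConjugate q) {f v : α → ℝ≥0∞}
    (hf : AEMeasurable f μ) (hv : AEMeasurable v μ) (hv0 : ∀ᵐ x ∂μ, v x ≠ 0)
    (hvtop : ∀ᵐ x ∂μ, v x ≠ ⊤) :
    ∫⁻ x, f x ∂μ ≤
      (∫⁻ x, (v x * f x) ^ p ∂μ) ^ (1 / p) * (∫⁻ x, (v x)⁻¹ ^ q ∂μ) ^ (1 / q) := by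
  calc ∫⁻ x, f x ∂μ = ∫⁻ x, ((fun x => v x * f x) * fun x => (v x)⁻¹) x ∂μ := by
        refine lintegral_congr_ae ?_
        filter_upwards [hv0, hvtop] with x h0 htop
        simp only [Pi.mul_apply]
        rw [mul_comm, ← mul_assoc, ENNReal.inv_mul_cancel h0 htop, one_mul]
    _ ≤ _ := ENNReal.lintegral_mul_le_Lp_mul_Lq μ hpq (hv.mul hf) hv.inv

lemma lintegral_Ioi_mul_lintegral_Ioo {w Φ : ℝ → ℝ≥0∞} (hw : Measurable w)
    (hΦ : Measurable Φ) :
    ∫⁻ x in Ioi 0, w x * ∫⁻ y in Ioo 0 x, Φ y =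
      ∫⁻ y in Ioi 0, Φ y * ∫⁻ x in Ioi y, w x := by
  have hk : Measurable ({z : ℝ × ℝ | z.2 < z.1}.indicator fun z => w z.1 * Φ z.2) :=
    ((hw.comp measurable_fst).mul (hΦ.comp measurable_snd)).indicator
      (measurableSet_lt measurable_snd measurable_fst)
  have hswap := lintegral_lintegral_swap (μ := volume.restrict (Ioi (0 : ℝ)))
    (ν := volume.restrict (Ioi (0 : ℝ)))
    (f := fun x y => {z : ℝ × ℝ | z.2 < z.1}.indicator (fun z => w z.1 * Φ z.2) (x, y))
    hk.aemeasurable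
  convert hswap using 1
  · refine lintegral_congr fun x => ?_
    rw [← lintegral_const_mul _ hΦ, ← Iio_inter_Ioi,
      ← Measure.restrict_restrict measurableSet_Iio, ← lintegral_indicator measurableSet_Iio]
    rfl
  · refine setLIntegral_congr_fun measurableSet_Ioi fun y hy => ?_
    rw [mul_comm, ← lintegral_mul_const _ hw, ← inter_eq_left.2 (Ioi_subset_Ioi hy.le),
      ← Measure.restrict_restrict measurableSet_Ioi, ← lintegral_indicator measurableSet_Ioi]
    rfl

lemma lintegral_Ioi_rpow_mul_lintegral_Ioo {σ : ℝ} (hσ : 0 < σ) {ψ : ℝ → ℝ≥0∞}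
    (hψ : Measurable ψ) :
    ∫⁻ x in Ioi 0, ENNReal.ofReal (x ^ (-1 - σ)) *
        ∫⁻ y in Ioo 0 x, ENNReal.ofReal (y ^ σ) * ψ y =
      ENNReal.ofReal σ⁻¹ * ∫⁻ y in Ioi 0, ψ y := by
  rw [lintegral_Ioi_mul_lintegral_Ioo (by fun_prop) (by fun_prop), ← lintegral_const_mul _ hψ]
  refine setLIntegral_congr_fun measurableSet_Ioi fun y (hy : 0 < y) => ?_
  rw [lintegral_Ioi_ofReal_rpow (by linarith) hy, show -1 - σ + 1 = -σ by ring, neg_neg,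
    mul_right_comm, ← ENNReal.ofReal_mul (by positivity), mul_div_assoc', ← Real.rpow_add hy,
    add_neg_cancel, Real.rpow_zero, one_div, mul_comm]

lemma lintegral_Ioo_zero_ofReal_le {p p' a δ x : ℝ} (hpp' : p.HolderConjugate p') (hδ : 0 < δ)
    (haδ : a + δ = 1 / p') (hx : 0 < x) {g : ℝ → ℝ} (hg : Measurable g) :
    ∫⁻ y in Ioo 0 x, ENNReal.ofReal (g y) ≤
      (∫⁻ y in Ioo 0 x, ENNReal.ofReal (y ^ a * g y) ^ p) ^ (1 / p) *
        ENNReal.ofReal (x ^ δ / (δ * p') ^ (1 / p')) := by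
  have hp' : 0 < p' := hpp'.symm.pos
  have hweight : ∫⁻ y in Ioo 0 x, (ENNReal.ofReal (y ^ a))⁻¹ ^ p' =
      ENNReal.ofReal (x ^ (δ * p') / (δ * p')) := by
    have hexp : -(a * p') + 1 = δ * p' := by
      field_simp at haδ
      linear_combination -haδ
    rw [← hexp, ← lintegral_Ioo_zero_ofReal_rpow (by nlinarith) hx]
    refine setLIntegral_congr_fun measurableSet_Ioo fun y hy => ?_
    rw [← ENNReal.ofReal_inv_of_pos (Real.rpow_pos_of_pos hy.1 a), ← Real.rpow_neg hy.1.le,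
      ENNReal.ofReal_rpow_of_nonneg (Real.rpow_nonneg hy.1.le _) hp'.le, ← Real.rpow_mul hy.1.le,
      neg_mul]
  calc ∫⁻ y in Ioo 0 x, ENNReal.ofReal (g y)
      ≤ (∫⁻ y in Ioo 0 x, (ENNReal.ofReal (y ^ a) * ENNReal.ofReal (g y)) ^ p) ^ (1 / p) *
          (∫⁻ y in Ioo 0 x, (ENNReal.ofReal (y ^ a))⁻¹ ^ p') ^ (1 / p') :=
        lintegral_le_lintegral_mul_rpow_mul_lintegral_inv_rpow hpp' (by fun_prop) (by fun_prop)
          (ae_restrict_of_forall_mem measurableSet_Ioo fun y hy => by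
            simpa using Real.rpow_pos_of_pos hy.1 a)
          (ae_of_all _ fun _ => ENNReal.ofReal_ne_top)
    _ = _ := by
        rw [hweight, ENNReal.ofReal_rpow_of_nonneg (by positivity) (by positivity),
          Real.div_rpow (by positivity) (by positivity), ← Real.rpow_mul hx.le,
          mul_assoc, mul_one_div_cancel hp'.ne', mul_one]
        congr 2
        refine setLIntegral_congr_fun measurableSet_Ioo fun y hy => ?_
        rw [ENNReal.ofReal_mul (Real.rpow_nonneg hy.1.le a)]

lemma ENNReal.rpow_le_of_le_rpow_mul_of_le_rpow_mul {p q : ℝ} (hp : 0 < p) (hpq : p ≤ q)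
    {G A F u v : ℝ≥0∞} (hA : G ≤ A ^ (1 / p) * u) (hF : G ≤ F ^ (1 / p) * v) :
    G ^ q ≤ A ^ (q / p - 1) * F * (u ^ (q - p) * v ^ p) := by
  have hqp : 0 ≤ q - p := sub_nonneg.2 hpq
  calc G ^ q = G ^ (q - p) * G ^ p := by
        rw [← ENNReal.rpow_add_of_nonneg _ _ hqp hp.le, sub_add_cancel]
    _ ≤ (A ^ (1 / p) * u) ^ (q - p) * (F ^ (1 / p) * v) ^ p := by gcongr
    _ = A ^ (q / p - 1) * F * (u ^ (q - p) * v ^ p) := by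
        rw [ENNReal.mul_rpow_of_nonneg _ _ hqp, ENNReal.mul_rpow_of_nonneg _ _ hp.le,
          ← ENNReal.rpow_mul, ← ENNReal.rpow_mul, one_div_mul_cancel hp.ne', ENNReal.rpow_one,
          show 1 / p * (q - p) = q / p - 1 by field_simp]
        ring

lemma ofReal_rpow_mul_ofReal_div_rpow_mul_ofReal_div_rpow {b p q δ c₀ c₁ x : ℝ} (hp : 0 < p)
    (hpq : p ≤ q) (hb : b * q + δ * q = -1) (hx : 0 < x) (hc₀ : 0 < c₀) (hc₁ : 0 < c₁) :
    ENNReal.ofReal (x ^ b) ^ q *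
        (ENNReal.ofReal (x ^ δ / c₀) ^ (q - p) * ENNReal.ofReal (x ^ (δ / 2) / c₁) ^ p) =
      ENNReal.ofReal (c₀ ^ (p - q) * c₁ ^ (-p)) * ENNReal.ofReal (x ^ (-1 - δ / 2 * p)) := by
  have hreal : (x ^ b) ^ q * ((x ^ δ / c₀) ^ (q - p) * (x ^ (δ / 2) / c₁) ^ p) =
      c₀ ^ (p - q) * c₁ ^ (-p) * x ^ (-1 - δ / 2 * p) := by
    rw [Real.div_rpow (by positivity) hc₀.le, Real.div_rpow (by positivity) hc₁.le,
      ← Real.rpow_mul hx.le, ← Real.rpow_mul hx.le, ← Real.rpow_mul hx.le,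
      show -1 - δ / 2 * p = b * q + δ * (q - p) + δ / 2 * p by linear_combination -hb,
      Real.rpow_add hx, Real.rpow_add hx, show p - q = -(q - p) by ring, Real.rpow_neg hc₀.le,
      Real.rpow_neg hc₁.le]
    ring
  rw [ENNReal.ofReal_rpow_of_nonneg (by positivity) (hp.trans_le hpq).le,
    ENNReal.ofReal_rpow_of_nonneg (by positivity) (by linarith),
    ENNReal.ofReal_rpow_of_nonneg (by positivity) hp.le, ← ENNReal.ofReal_mul (by positivity),
    ← ENNReal.ofReal_mul (by positivity), hreal, ENNReal.ofReal_mul (by positivity)]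

lemma rpow_mul_lintegral_Ioo_le {a b p q p' δ x : ℝ} (hpp' : p.HolderConjugate p')
    (hpq : p ≤ q) (hab : a - 1 / p' = b + 1 / q) (hδ : 0 < δ) (haδ : a + δ = 1 / p') (hx : 0 < x)
    {g : ℝ → ℝ} (hg : Measurable g) :
    (ENNReal.ofReal (x ^ b) * ∫⁻ y in Ioo 0 x, ENNReal.ofReal (g y)) ^ q ≤
      (∫⁻ y in Ioi 0, ENNReal.ofReal (y ^ a * g y) ^ p) ^ (q / p - 1) *
        ENNReal.ofReal (((δ * p') ^ (1 / p')) ^ (p - q) * ((δ / 2 * p') ^ (1 / p')) ^ (-p)) *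
        (ENNReal.ofReal (x ^ (-1 - δ / 2 * p)) *
          ∫⁻ y in Ioo 0 x,
            ENNReal.ofReal (y ^ (δ / 2 * p)) * ENNReal.ofReal (y ^ a * g y) ^ p) := by
  have hp : 0 < p := hpp'.pos
  have hq : 0 < q := hp.trans_le hpq
  have hA : ∫⁻ y in Ioo 0 x, ENNReal.ofReal (g y) ≤
      (∫⁻ y in Ioi 0, ENNReal.ofReal (y ^ a * g y) ^ p) ^ (1 / p) *
        ENNReal.ofReal (x ^ δ / (δ * p') ^ (1 / p')) :=
    (lintegral_Ioo_zero_ofReal_le hpp' hδ haδ hx hg).trans <| by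
      gcongr
      exact Ioo_subset_Ioi_self
  have hF := lintegral_Ioo_zero_ofReal_le hpp' (half_pos hδ) (a := a + δ / 2)
    (by linarith) hx hg
  set c₀ := (δ * p') ^ (1 / p')
  set c₁ := (δ / 2 * p') ^ (1 / p')
  have hc₀ : 0 < c₀ := Real.rpow_pos_of_pos (mul_pos hδ hpp'.symm.pos) _
  have hc₁ : 0 < c₁ := Real.rpow_pos_of_pos (mul_pos (half_pos hδ) hpp'.symm.pos) _
  have hweight : ∫⁻ y in Ioo 0 x, ENNReal.ofReal (y ^ (a + δ / 2) * g y) ^ p =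
      ∫⁻ y in Ioo 0 x,
        ENNReal.ofReal (y ^ (δ / 2 * p)) * ENNReal.ofReal (y ^ a * g y) ^ p := by
    refine setLIntegral_congr_fun measurableSet_Ioo fun y hy => ?_
    rw [Real.rpow_add hy.1, mul_comm (y ^ a), mul_assoc,
      ENNReal.ofReal_mul (Real.rpow_nonneg hy.1.le _), ENNReal.mul_rpow_of_nonneg _ _ hp.le,
      ENNReal.ofReal_rpow_of_nonneg (Real.rpow_nonneg hy.1.le _) hp.le, ← Real.rpow_mul hy.1.le]
  rw [hweight] at hF
  calc (ENNReal.ofReal (x ^ b) * ∫⁻ y in Ioo 0 x, ENNReal.ofReal (g y)) ^ q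
      = ENNReal.ofReal (x ^ b) ^ q * (∫⁻ y in Ioo 0 x, ENNReal.ofReal (g y)) ^ q :=
        ENNReal.mul_rpow_of_nonneg _ _ hq.le
    _ ≤ _ := by grw [ENNReal.rpow_le_of_le_rpow_mul_of_le_rpow_mul hp hpq hA hF]
    _ = _ := by
        rw [mul_left_comm, ofReal_rpow_mul_ofReal_div_rpow_mul_ofReal_div_rpow hp hpq
          (by rw [show b = -δ - 1 / q by linarith]; field_simp; ring) hx hc₀ hc₁]
        ring

lemma lintegral_rpow_mul_lintegral_Ioo_le {a b p q p' : ℝ} (hpp' : p.HolderConjugate p')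
    (hpq : p ≤ q) (hab : a - 1 / p' = b + 1 / q) (ha : a < 1 / p') :
    ∃ C : ℝ, 0 < C ∧ ∀ g : ℝ → ℝ, Measurable g →
      ∫⁻ x in Ioi 0,
          (ENNReal.ofReal (x ^ b) * ∫⁻ y in Ioo 0 x, ENNReal.ofReal (g y)) ^ q ≤
        ENNReal.ofReal C * (∫⁻ x in Ioi 0, ENNReal.ofReal (x ^ a * g x) ^ p) ^ (q / p) := by
  have hp : 0 < p := hpp'.pos
  set δ := 1 / p' - a
  have hδ : 0 < δ := sub_pos.2 ha
  have hσ : 0 < δ / 2 * p := by positivity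
  set K := ((δ * p') ^ (1 / p')) ^ (p - q) * ((δ / 2 * p') ^ (1 / p')) ^ (-p)
  have hK : 0 < K := by have := hpp'.symm.pos; positivity
  refine ⟨K * (δ / 2 * p)⁻¹, by positivity, fun g hg => ?_⟩
  set A := ∫⁻ x in Ioi 0, ENNReal.ofReal (x ^ a * g x) ^ p
  have hψ : Measurable fun y => ENNReal.ofReal (y ^ a * g y) ^ p := by fun_prop
  have hF : Measurable fun x : ℝ =>
      ∫⁻ y in Ioo 0 x, ENNReal.ofReal (y ^ (δ / 2 * p)) * ENNReal.ofReal (y ^ a * g y) ^ p :=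
    Monotone.measurable fun _ _ h => lintegral_mono_set (Ioo_subset_Ioo_right h)
  calc ∫⁻ x in Ioi 0, (ENNReal.ofReal (x ^ b) * ∫⁻ y in Ioo 0 x, ENNReal.ofReal (g y)) ^ q
      ≤ ∫⁻ x in Ioi 0, A ^ (q / p - 1) * ENNReal.ofReal K *
          (ENNReal.ofReal (x ^ (-1 - δ / 2 * p)) *
            ∫⁻ y in Ioo 0 x,
              ENNReal.ofReal (y ^ (δ / 2 * p)) * ENNReal.ofReal (y ^ a * g y) ^ p) :=
        setLIntegral_mono' measurableSet_Ioi fun x hx =>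
          rpow_mul_lintegral_Ioo_le hpp' hpq hab hδ (by ring) hx hg
    _ = A ^ (q / p - 1) * ENNReal.ofReal K * (ENNReal.ofReal (δ / 2 * p)⁻¹ * A) := by
        rw [lintegral_const_mul _ (by fun_prop),
          lintegral_Ioi_rpow_mul_lintegral_Ioo hσ hψ]
    _ = ENNReal.ofReal (K * (δ / 2 * p)⁻¹) * A ^ (q / p) := by
        have hApow : A ^ (q / p - 1) * A ^ (1 : ℝ) = A ^ (q / p) := by
          rw [← ENNReal.rpow_add_of_nonneg _ _ (by rw [sub_nonneg, one_le_div hp]; exact hpq)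
            zero_le_one, sub_add_cancel]
        rw [ENNReal.rpow_one] at hApow
        rw [ENNReal.ofReal_mul hK.le, ← hApow]
        ring

theorem stmt_9 (a b p q p' : ℝ) (hp : 1 < p) (hpq : p ≤ q)
    (hp' : 1/p + 1/p' = 1) (hab : a - 1/p' = b + 1/q) (ha : a < 1/p') :
    ∃ C : ℝ, 0 < C ∧ ∀ g : ℝ → ℝ, Measurable g → (∀ x, 0 ≤ g x) →
      (∫⁻ x in Set.Ioi (0:ℝ),
          (ENNReal.ofReal (x ^ b) * ∫⁻ y in Set.Ioo (0:ℝ) x, ENNReal.ofReal (g y)) ^ q) ^ (1/q)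
      ≤ ENNReal.ofReal C *
        (∫⁻ x in Set.Ioi (0:ℝ),
          (ENNReal.ofReal (x ^ a * g x)) ^ p) ^ (1/p) := by
  have hpp' : p.HolderConjugate p' :=
    Real.holderConjugate_iff.2 ⟨hp, by simpa only [one_div] using hp'⟩
  have hq : 0 < q := by linarith
  obtain ⟨C, hC, hle⟩ := lintegral_rpow_mul_lintegral_Ioo_le hpp' hpq hab ha
  refine ⟨C ^ (1 / q), by positivity, fun g hg _ => ?_⟩
  calc _ ≤ (ENNReal.ofReal C *
          (∫⁻ x in Ioi 0, ENNReal.ofReal (x ^ a * g x) ^ p) ^ (q / p)) ^ (1 / q) :=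
        ENNReal.rpow_le_rpow (hle g hg) (by positivity)
    _ = _ := by
        rw [ENNReal.mul_rpow_of_nonneg _ _ (by positivity),
          ENNReal.ofReal_rpow_of_nonneg hC.le (by positivity), ← ENNReal.rpow_mul,
          show q / p * (1 / q) = 1 / p by field_simp]
end

section
/- Let a, b ∈ ℝ and 1 < p ≤ q < ∞ with a - 1/p' = b + 1/q and b > -1/q. Then there is a constant C such that for all nonnegative measurable g on (0,∞): (∫_0^∞ (x^b ∫_x^∞ g(y) dy)^q dx)^{1/q} ≤ C (∫_0^∞ (x^a g(x))^p dx)^{1/p}. -/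
/-!
Put σ = b + 1/q > 0, so that a = σ + 1/p'. Hölder's inequality on (x, ∞) against the weight
y^(-a) gives the pointwise bound ∫_x^∞ g ≤ (σp')^(-1/p') ‖y^a g‖_p x^(-σ). Spending q - p
powers of the tail on this bound reduces the inequality to the diagonal case q = p. That case
follows from the same Hölder bound with an exponent τ ∈ (0, σ) in place of σ, followed by
Tonelli: the leftover weight x^((σ-τ)p-1) integrates over (0, y) to y^((σ-τ)p)/((σ-τ)p), which
restores the weight y^(ap).
-/

open MeasureTheory Set ENNReal

lemma ofReal_rpow_mul_ofReal_rpow {x : ℝ} (hx : 0 < x) (r s : ℝ) :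
    ENNReal.ofReal (x ^ r) * ENNReal.ofReal (x ^ s) = ENNReal.ofReal (x ^ (r + s)) := by
  rw [← ENNReal.ofReal_mul (Real.rpow_nonneg hx.le r), Real.rpow_add hx]

lemma ofReal_rpow_mul_rpow {x : ℝ} (hx : 0 < x) (r t : ℝ) {p : ℝ} (hp : 0 ≤ p) :
    ENNReal.ofReal (x ^ r * t) ^ p = ENNReal.ofReal (x ^ (r * p)) * ENNReal.ofReal t ^ p := by
  rw [ENNReal.ofReal_mul (Real.rpow_nonneg hx.le r), ENNReal.mul_rpow_of_nonneg _ _ hp,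
    ENNReal.ofReal_rpow_of_pos (Real.rpow_pos_of_pos hx r), ← Real.rpow_mul hx.le]

lemma lintegral_Ioi_rpow_of_lt {c r : ℝ} (hc : 0 < c) (hr : r < -1) :
    ∫⁻ y in Ioi c, ENNReal.ofReal (y ^ r) = ENNReal.ofReal (-c ^ (r + 1) / (r + 1)) := by
  rw [← ofReal_integral_eq_lintegral_ofReal (integrableOn_Ioi_rpow_of_lt hr hc)
      ((ae_restrict_mem measurableSet_Ioi).mono fun y hy => Real.rpow_nonneg (hc.trans hy).le r),
    integral_Ioi_rpow_of_lt hr hc]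

lemma lintegral_Ioo_zero_rpow {y r : ℝ} (hy : 0 < y) (hr : -1 < r) :
    ∫⁻ x in Ioo 0 y, ENNReal.ofReal (x ^ r) = ENNReal.ofReal (y ^ (r + 1) / (r + 1)) := by
  have hint : IntegrableOn (fun x : ℝ => x ^ r) (Ioc 0 y) := by
    rw [← intervalIntegrable_iff_integrableOn_Ioc_of_le hy.le]
    exact intervalIntegral.intervalIntegrable_rpow' hr
  rw [Measure.restrict_congr_set Ioo_ae_eq_Ioc, ← ofReal_integral_eq_lintegral_ofReal hint
      ((ae_restrict_mem measurableSet_Ioc).mono fun x hx => Real.rpow_nonneg hx.1.le r),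
    ← intervalIntegral.integral_of_le hy.le, integral_rpow (Or.inl hr),
    Real.zero_rpow (by linarith), sub_zero]

lemma lintegral_Ioi_mul_lintegral_Ioi_swap {μ : Measure ℝ} [SFinite μ] {w f : ℝ → ℝ≥0∞}
    (hw : Measurable w) (hf : Measurable f) :
    ∫⁻ x in Ioi 0, w x * ∫⁻ y in Ioi x, f y ∂μ ∂μ
      = ∫⁻ y in Ioi 0, f y * ∫⁻ x in Ioo 0 y, w x ∂μ ∂μ := by
  set k : ℝ → ℝ → ℝ≥0∞ := fun x y =>
    {z : ℝ × ℝ | z.1 < z.2}.indicator (fun z => w z.1 * f z.2) (x, y)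
  have hk : Measurable (Function.uncurry k) :=
    ((hw.comp measurable_fst).mul (hf.comp measurable_snd)).indicator
      (measurableSet_lt measurable_fst measurable_snd)
  have hleft : ∀ x ∈ Ioi (0 : ℝ),
      w x * ∫⁻ y in Ioi x, f y ∂μ = ∫⁻ y in Ioi 0, k x y ∂μ := by
    intro x hx
    have : k x = (Ioi x).indicator fun y => w x * f y := by
      ext y; simp [k, indicator_apply]
    rw [this, lintegral_indicator measurableSet_Ioi,
      Measure.restrict_restrict measurableSet_Ioi,
      inter_eq_left.mpr (Ioi_subset_Ioi (le_of_lt hx)), lintegral_const_mul _ hf]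
  have hright : ∀ y ∈ Ioi (0 : ℝ),
      f y * ∫⁻ x in Ioo 0 y, w x ∂μ = ∫⁻ x in Ioi 0, k x y ∂μ := by
    intro y hy
    have : (fun x => k x y) = (Iio y).indicator fun x => f y * w x := by
      ext x; simp [k, indicator_apply, mul_comm]
    rw [this, lintegral_indicator measurableSet_Iio,
      Measure.restrict_restrict measurableSet_Iio, Iio_inter_Ioi, lintegral_const_mul _ hw]
  rw [setLIntegral_congr_fun measurableSet_Ioi hleft,
    setLIntegral_congr_fun measurableSet_Ioi hright, lintegral_lintegral_swap hk.aemeasurable]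

lemma lintegral_Ioi_le_weighted_tail {p p' σ : ℝ} (hpp' : p.HolderConjugate p') (hσ : 0 < σ)
    {g : ℝ → ℝ} (hg : Measurable g) (hg0 : ∀ y, 0 ≤ g y) {x : ℝ} (hx : 0 < x) :
    ∫⁻ y in Ioi x, ENNReal.ofReal (g y)
      ≤ (∫⁻ y in Ioi x, ENNReal.ofReal (y ^ (σ + 1 / p') * g y) ^ p) ^ (1 / p)
        * ENNReal.ofReal ((σ * p') ^ (-(1 / p')) * x ^ (-σ)) := by
  have hp' : 0 < p' := hpp'.symm.pos
  have hsplit : ∀ y ∈ Ioi x, ENNReal.ofReal (g y)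
      = ENNReal.ofReal (y ^ (σ + 1 / p') * g y) * ENNReal.ofReal (y ^ (-(σ + 1 / p'))) := by
    intro y hy
    have hy0 : 0 < y := hx.trans hy
    rw [← ENNReal.ofReal_mul (mul_nonneg (Real.rpow_nonneg hy0.le _) (hg0 y)), mul_right_comm,
      ← Real.rpow_add hy0, add_neg_cancel, Real.rpow_zero, one_mul]
  have hweight : ∫⁻ y in Ioi x, ENNReal.ofReal (y ^ (-(σ + 1 / p'))) ^ p'
      = ENNReal.ofReal ((σ * p') ^ (-(1 / p')) * x ^ (-σ)) ^ p' := by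
    have hexp : -(σ + 1 / p') * p' = -(σ * p') - 1 := by field_simp; ring
    rw [setLIntegral_congr_fun measurableSet_Ioi fun y hy => by
        rw [ENNReal.ofReal_rpow_of_pos (Real.rpow_pos_of_pos (hx.trans hy) _),
          ← Real.rpow_mul (hx.trans hy).le, hexp],
      lintegral_Ioi_rpow_of_lt hx (by nlinarith),
      ENNReal.ofReal_rpow_of_nonneg (by positivity) hp'.le,
      Real.mul_rpow (by positivity) (by positivity), ← Real.rpow_mul (by positivity),
      ← Real.rpow_mul hx.le]
    congr 1
    rw [sub_add_cancel, show -(1 / p') * p' = -1 by field_simp, Real.rpow_neg_one]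
    field_simp
  calc ∫⁻ y in Ioi x, ENNReal.ofReal (g y)
      = ∫⁻ y in Ioi x,
          ENNReal.ofReal (y ^ (σ + 1 / p') * g y) * ENNReal.ofReal (y ^ (-(σ + 1 / p'))) :=
        setLIntegral_congr_fun measurableSet_Ioi hsplit
    _ ≤ _ := ENNReal.lintegral_mul_le_Lp_mul_Lq _ hpp'
        (((measurable_id.pow_const _).mul hg).ennreal_ofReal.aemeasurable)
        ((measurable_id.pow_const _).ennreal_ofReal.aemeasurable)
    _ = _ := by
        rw [hweight, ← ENNReal.rpow_mul, mul_one_div_cancel hp'.ne', ENNReal.rpow_one]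

lemma lintegral_Ioi_le_weighted_norm_mul_rpow_neg {p p' σ : ℝ} (hpp' : p.HolderConjugate p')
    (hσ : 0 < σ) {g : ℝ → ℝ} (hg : Measurable g) (hg0 : ∀ y, 0 ≤ g y) {x : ℝ} (hx : 0 < x) :
    ∫⁻ y in Ioi x, ENNReal.ofReal (g y)
      ≤ (∫⁻ y in Ioi 0, ENNReal.ofReal (y ^ (σ + 1 / p') * g y) ^ p) ^ (1 / p)
        * ENNReal.ofReal ((σ * p') ^ (-(1 / p'))) * ENNReal.ofReal (x ^ (-σ)) := by
  refine (lintegral_Ioi_le_weighted_tail hpp' hσ hg hg0 hx).trans ?_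
  rw [ENNReal.ofReal_mul (Real.rpow_pos_of_pos (mul_pos hσ hpp'.symm.pos) _).le, ← mul_assoc]
  gcongr ?_ * _ * _
  exact ENNReal.rpow_le_rpow (lintegral_mono_set (Ioi_subset_Ioi hx.le))
    (one_div_pos.mpr hpp'.pos).le

lemma lintegral_rpow_mul_lintegral_Ioi_rpow_le {p p' σ τ : ℝ} (hpp' : p.HolderConjugate p')
    (hτ : 0 < τ) (hτσ : τ < σ) {g : ℝ → ℝ} (hg : Measurable g) (hg0 : ∀ y, 0 ≤ g y) :
    ∫⁻ x in Ioi 0,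
        ENNReal.ofReal (x ^ (σ * p - 1)) * (∫⁻ y in Ioi x, ENNReal.ofReal (g y)) ^ p
      ≤ ENNReal.ofReal ((τ * p') ^ (-(p / p')) * ((σ - τ) * p)⁻¹)
        * ∫⁻ x in Ioi 0, ENNReal.ofReal (x ^ (σ + 1 / p') * g x) ^ p := by
  have hp : 0 < p := hpp'.pos
  have hp' : 0 < p' := hpp'.symm.pos
  set c := (τ * p') ^ (-(p / p'))
  set G : ℝ → ℝ≥0∞ := fun x => ∫⁻ y in Ioi x, ENNReal.ofReal (y ^ (τ + 1 / p') * g y) ^ p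
  have hpointwise : ∀ x ∈ Ioi (0 : ℝ),
      ENNReal.ofReal (x ^ (σ * p - 1)) * (∫⁻ y in Ioi x, ENNReal.ofReal (g y)) ^ p
        ≤ ENNReal.ofReal c * (ENNReal.ofReal (x ^ ((σ - τ) * p - 1)) * G x) := by
    intro x hx
    have hx0 : 0 < x := hx
    have hholder := ENNReal.rpow_le_rpow (lintegral_Ioi_le_weighted_tail hpp' hτ hg hg0 hx0) hp.le
    rw [ENNReal.mul_rpow_of_nonneg _ _ hp.le, ← ENNReal.rpow_mul, one_div_mul_cancel hp.ne',
      ENNReal.rpow_one, ENNReal.ofReal_rpow_of_nonneg (by positivity) hp.le,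
      Real.mul_rpow (by positivity) (by positivity), ← Real.rpow_mul (by positivity),
      ← Real.rpow_mul hx0.le, show -(1 / p') * p = -(p / p') by ring,
      ENNReal.ofReal_mul (by positivity)] at hholder
    calc ENNReal.ofReal (x ^ (σ * p - 1)) * (∫⁻ y in Ioi x, ENNReal.ofReal (g y)) ^ p
        ≤ ENNReal.ofReal (x ^ (σ * p - 1))
            * (G x * (ENNReal.ofReal c * ENNReal.ofReal (x ^ (-τ * p)))) := by
          gcongr
      _ = ENNReal.ofReal c * (ENNReal.ofReal (x ^ ((σ - τ) * p - 1)) * G x) := by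
          rw [show (σ - τ) * p - 1 = σ * p - 1 + -τ * p by ring,
            ← ofReal_rpow_mul_ofReal_rpow hx0]
          ring
  have hinner : ∀ y ∈ Ioi (0 : ℝ),
      ENNReal.ofReal (y ^ (τ + 1 / p') * g y) ^ p
          * ∫⁻ x in Ioo 0 y, ENNReal.ofReal (x ^ ((σ - τ) * p - 1))
        = ENNReal.ofReal ((σ - τ) * p)⁻¹ * ENNReal.ofReal (y ^ (σ + 1 / p') * g y) ^ p := by
    intro y hy
    have hy0 : 0 < y := hy
    rw [lintegral_Ioo_zero_rpow hy0 (by nlinarith), sub_add_cancel,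
      ofReal_rpow_mul_rpow hy0 _ _ hp.le, ofReal_rpow_mul_rpow hy0 _ _ hp.le,
      div_eq_mul_inv (y ^ _), ENNReal.ofReal_mul (by positivity),
      show (σ + 1 / p') * p = (τ + 1 / p') * p + (σ - τ) * p by ring,
      ← ofReal_rpow_mul_ofReal_rpow hy0]
    ring
  calc _ ≤ ∫⁻ x in Ioi 0, ENNReal.ofReal c * (ENNReal.ofReal (x ^ ((σ - τ) * p - 1)) * G x) :=
        setLIntegral_mono' measurableSet_Ioi hpointwise
    _ = ENNReal.ofReal c * ∫⁻ y in Ioi 0, ENNReal.ofReal (y ^ (τ + 1 / p') * g y) ^ p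
          * ∫⁻ x in Ioo 0 y, ENNReal.ofReal (x ^ ((σ - τ) * p - 1)) := by
        rw [lintegral_const_mul' _ _ ENNReal.ofReal_ne_top]
        exact congrArg _ <| lintegral_Ioi_mul_lintegral_Ioi_swap
          (measurable_id.pow_const _).ennreal_ofReal
          (((measurable_id.pow_const _).mul hg).ennreal_ofReal.pow_const _)
    _ = _ := by
        rw [setLIntegral_congr_fun measurableSet_Ioi hinner,
          lintegral_const_mul' _ _ ENNReal.ofReal_ne_top, ← mul_assoc,
          ← ENNReal.ofReal_mul (by positivity)]

lemma ofReal_rpow_mul_rpow_le_of_le_mul_rpow_neg {x b p q : ℝ} (hx : 0 < x) (hp : 0 ≤ p)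
    (hq : 0 < q) (hpq : p ≤ q) {F M : ℝ≥0∞} (hF : F ≤ M * ENNReal.ofReal (x ^ (-(b + 1 / q)))) :
    (ENNReal.ofReal (x ^ b) * F) ^ q
      ≤ M ^ (q - p) * (ENNReal.ofReal (x ^ ((b + 1 / q) * p - 1)) * F ^ p) := by
  have hqp : 0 ≤ q - p := sub_nonneg.mpr hpq
  calc (ENNReal.ofReal (x ^ b) * F) ^ q
      = ENNReal.ofReal (x ^ b) ^ q * (F ^ (q - p) * F ^ p) := by
        rw [ENNReal.mul_rpow_of_nonneg _ _ hq.le, ← ENNReal.rpow_add_of_nonneg _ _ hqp hp,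
          sub_add_cancel]
    _ ≤ ENNReal.ofReal (x ^ b) ^ q
          * ((M * ENNReal.ofReal (x ^ (-(b + 1 / q)))) ^ (q - p) * F ^ p) := by
        gcongr
    _ = M ^ (q - p) * (ENNReal.ofReal (x ^ ((b + 1 / q) * p - 1)) * F ^ p) := by
        rw [ENNReal.mul_rpow_of_nonneg _ _ hqp, ENNReal.ofReal_rpow_of_pos (by positivity),
          ENNReal.ofReal_rpow_of_pos (by positivity), ← Real.rpow_mul hx.le,
          ← Real.rpow_mul hx.le, show (b + 1 / q) * p - 1 = b * q + -(b + 1 / q) * (q - p) by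
            field_simp; ring, ← ofReal_rpow_mul_ofReal_rpow hx]
        ring

lemma ENNReal.rpow_one_div_mul_rpow_sub_mul {A D K : ℝ≥0∞} {p q : ℝ} (hp : 0 ≤ p)
    (hq : 0 < q) (hpq : p ≤ q) :
    ((A * D) ^ (q - p) * (K * A ^ p)) ^ (1 / q) = (D ^ (q - p) * K) ^ (1 / q) * A := by
  have hA : A ^ q = A ^ (q - p) * A ^ p := by
    rw [← ENNReal.rpow_add_of_nonneg _ _ (sub_nonneg.mpr hpq) hp, sub_add_cancel]
  rw [ENNReal.mul_rpow_of_nonneg _ _ (sub_nonneg.mpr hpq),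
    show A ^ (q - p) * D ^ (q - p) * (K * A ^ p) = D ^ (q - p) * K * A ^ q by rw [hA]; ring,
    ENNReal.mul_rpow_of_nonneg _ _ (by positivity), ← ENNReal.rpow_mul,
    mul_one_div_cancel hq.ne', ENNReal.rpow_one]

theorem stmt_10 (a b p q p' : ℝ) (hp : 1 < p) (hpq : p ≤ q)
    (hp' : 1/p + 1/p' = 1) (hab : a - 1/p' = b + 1/q) (hb : b > -(1/q)) :
    ∃ C : ℝ, 0 < C ∧ ∀ g : ℝ → ℝ, Measurable g → (∀ x, 0 ≤ g x) →
      (∫⁻ x in Set.Ioi (0:ℝ),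
          (ENNReal.ofReal (x ^ b) * ∫⁻ y in Set.Ioi x, ENNReal.ofReal (g y)) ^ q) ^ (1/q)
      ≤ ENNReal.ofReal C *
        (∫⁻ x in Set.Ioi (0:ℝ),
          (ENNReal.ofReal (x ^ a * g x)) ^ p) ^ (1/p) := by
  have hpp' : p.HolderConjugate p' :=
    Real.holderConjugate_iff.mpr ⟨hp, by simpa only [one_div] using hp'⟩
  have hq : 0 < q := by linarith
  set σ := b + 1 / q
  have hσ : 0 < σ := by linarith
  obtain rfl : a = σ + 1 / p' := by linarith
  set d := (σ * p') ^ (-(1 / p'))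
  set K := (σ / 2 * p') ^ (-(p / p')) * ((σ - σ / 2) * p)⁻¹
  have hd : 0 < d := Real.rpow_pos_of_pos (mul_pos hσ hpp'.symm.pos) _
  have hK : 0 < K := mul_pos (Real.rpow_pos_of_pos (mul_pos (half_pos hσ) hpp'.symm.pos) _)
    (inv_pos.mpr (mul_pos (by linarith) hpp'.pos))
  refine ⟨(d ^ (q - p) * K) ^ (1 / q), by positivity, fun g hg hg0 => ?_⟩
  set A := (∫⁻ x in Ioi 0, ENNReal.ofReal (x ^ (σ + 1 / p') * g x) ^ p) ^ (1 / p)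
  rcases eq_or_ne A ⊤ with hA | hA
  · rw [hA, ENNReal.mul_top (by positivity)]
    exact le_top
  calc _ ≤ (∫⁻ x in Ioi 0, (A * ENNReal.ofReal d) ^ (q - p)
            * (ENNReal.ofReal (x ^ (σ * p - 1)) * (∫⁻ y in Ioi x, ENNReal.ofReal (g y)) ^ p))
            ^ (1 / q) := by
        refine ENNReal.rpow_le_rpow (setLIntegral_mono' measurableSet_Ioi fun x hx => ?_)
          (by positivity)
        exact ofReal_rpow_mul_rpow_le_of_le_mul_rpow_neg hx hpp'.pos.le hq hpq
          (lintegral_Ioi_le_weighted_norm_mul_rpow_neg hpp' hσ hg hg0 hx)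
    _ ≤ ((A * ENNReal.ofReal d) ^ (q - p) * (ENNReal.ofReal K * A ^ p)) ^ (1 / q) := by
        rw [lintegral_const_mul' _ _ (by finiteness), ← ENNReal.rpow_mul,
          one_div_mul_cancel hpp'.pos.ne', ENNReal.rpow_one]
        gcongr
        exact lintegral_rpow_mul_lintegral_Ioi_rpow_le hpp' (half_pos hσ) (half_lt_self hσ)
          hg hg0
    _ = _ := by
        rw [ENNReal.rpow_one_div_mul_rpow_sub_mul hpp'.pos.le hq hpq,
          ENNReal.ofReal_rpow_of_pos hd, ← ENNReal.ofReal_mul (by positivity),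
          ENNReal.ofReal_rpow_of_nonneg (by positivity) (by positivity)]
end

section
/- Let -1 < γ < 0. Define L(x,z) = ((1-|x-z|)(x+z-1)/(x+z-|x-z|))^γ for x, z > 0 with |x-z| < 1 and x+z > 1, and L(x,z) = 0 otherwise. Then there is a constant C, depending only on γ, such that ∫_0^∞ L(x,z) dz ≤ C for every x > 0. -/
/-!
With `a = 1 - |x - z|` and `b = x + z - 1` the kernel is `(ab / (a + b)) ^ γ`, and
`ab / (a + b) ≥ min a b / 2`, so for `γ < 0` it is at most `2 ^ (-γ) * min a b ^ γ`.
On the support `a = min p q` with `p = z - (x - 1)`, `q = x + 1 - z`, `p + q = 2`, so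
`m = min (min p q) b` lies in `(0, 2)` and is one of `p, q, b`. Hence `m ^ γ ≤ φ p + φ q + φ b`
for `φ = 1_(0,2) · u ^ γ`, and each of these three translates or reflections of `φ` integrates in
`z` to `∫₀² u ^ γ du = 2 ^ (γ + 1) / (γ + 1)`, giving `C = 6 / (γ + 1)`.
-/

open MeasureTheory Set

lemma rpow_mul_div_add_le {γ a b : ℝ} (hγ : γ ≤ 0) (ha : 0 < a) (hb : 0 < b) :
    (a * b / (a + b)) ^ γ ≤ 2 ^ (-γ) * min a b ^ γ := by
  have hmin : min a b / 2 ≤ a * b / (a + b) := by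
    rw [div_le_div_iff₀ two_pos (by positivity)]
    rcases le_total a b with hab | hab
    · rw [min_eq_left hab]; nlinarith
    · rw [min_eq_right hab]; nlinarith
  calc (a * b / (a + b)) ^ γ ≤ (min a b / 2) ^ γ :=
        Real.rpow_le_rpow_of_nonpos (by positivity) hmin hγ
    _ = 2 ^ (-γ) * min a b ^ γ := by
        rw [Real.div_rpow (lt_min ha hb).le zero_le_two, Real.rpow_neg zero_le_two, div_eq_inv_mul]

lemma rpow_min_le_indicator_add {γ p q b : ℝ} (hp : 0 < p) (hq : 0 < q) (hb : 0 < b)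
    (hpq : p + q = 2) :
    min (min p q) b ^ γ ≤ (Ioo 0 2).indicator (· ^ γ) p + (Ioo 0 2).indicator (· ^ γ) q
      + (Ioo 0 2).indicator (· ^ γ) b := by
  set φ : ℝ → ℝ := (Ioo 0 2).indicator (· ^ γ)
  have hφ : ∀ u, 0 ≤ φ u := indicator_nonneg fun v hv => Real.rpow_nonneg (le_of_lt hv.1) γ
  have hmem : min (min p q) b ∈ Ioo 0 2 :=
    ⟨lt_min (lt_min hp hq) hb, (min_le_left _ _).trans_lt ((min_le_left _ _).trans_lt (by linarith))⟩
  rw [← indicator_of_mem hmem (· ^ γ)]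
  rcases min_choice (min p q) b with h | h <;> rw [h]
  · rcases min_choice p q with h' | h' <;> rw [h'] <;> linarith [hφ p, hφ q, hφ b]
  · linarith [hφ p, hφ q]

lemma lintegral_ofReal_indicator_Ioo_rpow {γ s : ℝ} (hγ : -1 < γ) (hs : 0 ≤ s) :
    ∫⁻ u, ENNReal.ofReal ((Ioo 0 s).indicator (· ^ γ) u) =
      ENNReal.ofReal (s ^ (γ + 1) / (γ + 1)) := by
  have hint : IntegrableOn (· ^ γ) (Ioo 0 s) :=
    ((intervalIntegrable_iff_integrableOn_Ioc_of_le hs).1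
      (intervalIntegral.intervalIntegrable_rpow' hγ)).mono_set Ioo_subset_Ioc_self
  rw [← ofReal_integral_eq_lintegral_ofReal (hint.integrable_indicator measurableSet_Ioo)
    (Filter.Eventually.of_forall
      (indicator_nonneg fun v hv => Real.rpow_nonneg (le_of_lt hv.1) γ)),
    integral_indicator measurableSet_Ioo, ← integral_Ioc_eq_integral_Ioo,
    ← intervalIntegral.integral_of_le hs, integral_rpow (Or.inl hγ),
    Real.zero_rpow (by linarith), sub_zero]

lemma ofReal_kernel_le {γ : ℝ} (hγ : γ ≤ 0) (x z : ℝ) :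
    ENNReal.ofReal (if |x - z| < 1 ∧ 1 < x + z then
        ((1 - |x - z|) * (x + z - 1) / (x + z - |x - z|)) ^ γ else 0) ≤
      ENNReal.ofReal (2 ^ (-γ)) * (ENNReal.ofReal ((Ioo 0 2).indicator (· ^ γ) (z - (x - 1)))
        + ENNReal.ofReal ((Ioo 0 2).indicator (· ^ γ) ((x + 1) - z))
        + ENNReal.ofReal ((Ioo 0 2).indicator (· ^ γ) (z - (1 - x)))) := by
  have hφ : ∀ u : ℝ, 0 ≤ (Ioo 0 2).indicator (· ^ γ) u :=
    indicator_nonneg fun v hv => Real.rpow_nonneg (le_of_lt hv.1) γ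
  split_ifs with h
  swap
  · simp
  rw [← ENNReal.ofReal_add (hφ _) (hφ _), ← ENNReal.ofReal_add (add_nonneg (hφ _) (hφ _)) (hφ _),
    ← ENNReal.ofReal_mul (by positivity)]
  refine ENNReal.ofReal_le_ofReal ?_
  obtain ⟨hxz, hb⟩ := h
  obtain ⟨hp, hq⟩ := abs_lt.1 hxz
  have ha : 1 - |x - z| = min (z - (x - 1)) ((x + 1) - z) := by
    rw [abs_eq_max_neg, ← min_sub_sub_left]
    congr 1 <;> ring
  rw [show x + z - |x - z| = (1 - |x - z|) + (z - (1 - x)) by ring,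
    show x + z - 1 = z - (1 - x) by ring, ha]
  refine (rpow_mul_div_add_le hγ (lt_min (by linarith) (by linarith)) (by linarith)).trans ?_
  gcongr
  exact rpow_min_le_indicator_add (by linarith) (by linarith) (by linarith) (by ring)

lemma lintegral_ofReal_kernel_bound {γ : ℝ} (hγ : -1 < γ) (x : ℝ) :
    ∫⁻ z, ENNReal.ofReal (2 ^ (-γ)) * (ENNReal.ofReal ((Ioo 0 2).indicator (· ^ γ) (z - (x - 1)))
        + ENNReal.ofReal ((Ioo 0 2).indicator (· ^ γ) ((x + 1) - z))
        + ENNReal.ofReal ((Ioo 0 2).indicator (· ^ γ) (z - (1 - x)))) =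
      ENNReal.ofReal (6 / (γ + 1)) := by
  set φ : ℝ → ℝ := (Ioo 0 2).indicator (· ^ γ)
  have hφ : Measurable φ := (measurable_id.pow_const γ).indicator measurableSet_Ioo
  have hJ : 0 ≤ (2 : ℝ) ^ (γ + 1) / (γ + 1) := div_nonneg (by positivity) (by linarith)
  rw [lintegral_const_mul' _ _ ENNReal.ofReal_ne_top, lintegral_add_left (by fun_prop),
    lintegral_add_left (by fun_prop),
    lintegral_sub_right_eq_self (fun u => ENNReal.ofReal (φ u)),
    lintegral_sub_left_eq_self (fun u => ENNReal.ofReal (φ u)),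
    lintegral_sub_right_eq_self (fun u => ENNReal.ofReal (φ u)),
    lintegral_ofReal_indicator_Ioo_rpow hγ zero_le_two,
    ← ENNReal.ofReal_add hJ hJ, ← ENNReal.ofReal_add (add_nonneg hJ hJ) hJ,
    ← ENNReal.ofReal_mul (by positivity), Real.rpow_add two_pos, Real.rpow_one,
    Real.rpow_neg zero_le_two]
  congr 1
  field_simp
  norm_num

theorem stmt_11 (γ : ℝ) (hγ₁ : -1 < γ) (hγ₂ : γ < 0) :
    ∃ C : ℝ, 0 < C ∧ ∀ x : ℝ, 0 < x →
      (∫⁻ z in Set.Ioi (0:ℝ),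
        ENNReal.ofReal (if |x - z| < 1 ∧ 1 < x + z then
          ((1 - |x - z|) * (x + z - 1) / (x + z - |x - z|)) ^ γ else 0))
      ≤ ENNReal.ofReal C := by
  refine ⟨6 / (γ + 1), div_pos (by norm_num) (by linarith), fun x _ => ?_⟩
  calc _ ≤ ∫⁻ z, ENNReal.ofReal (if |x - z| < 1 ∧ 1 < x + z then
          ((1 - |x - z|) * (x + z - 1) / (x + z - |x - z|)) ^ γ else 0) :=
        setLIntegral_le_lintegral _ _
    _ ≤ _ := lintegral_mono (ofReal_kernel_le hγ₂.le x)
    _ = _ := lintegral_ofReal_kernel_bound hγ₁ x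
end

section
/- Let α > -1 and -1 < γ < 0. Then there exists C > 0 such that for all F ∈ L²((0,∞), dx): (∫_0^1 (∫_0^y (z/y)^{α+1/2} (y-z)^γ |F(z)| dz)² dy)^{1/2} ≤ C (∫_0^∞ F(z)² dz)^{1/2}. -/
/-!
Substituting `z = y r` turns the inner integral into
`∫₀¹ r^(α+1/2) (1-r)^γ · y^(γ+1) |F(y r)| dr`. By Minkowski's integral inequality the `L²(0,1)`
norm in `y` is at most `∫₀¹ r^(α+1/2) (1-r)^γ ‖y ↦ y^(γ+1) F(y r)‖ dr`, and since `y^(γ+1) ≤ 1`,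
dilating back gives `‖y ↦ y^(γ+1) F(y r)‖ ≤ r^(-1/2) ‖F‖`. What remains is the Beta integral
`∫₀¹ r^α (1-r)^γ dr`, finite for `α, γ > -1`.
-/

open MeasureTheory Set ENNReal Function

section Minkowski

variable {X Y : Type*} [MeasurableSpace X] [MeasurableSpace Y] {μ : Measure X} {ν : Measure Y}
  [SFinite μ] [SFinite ν]

/-- Expand the square as a double integral over `ν ⊗ ν`, integrate in `x` first and apply
Cauchy–Schwarz there. -/
theorem minkowski_lintegral_sq {f : X → Y → ℝ≥0∞} (hf : Measurable (uncurry f)) :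
    ∫⁻ x, (∫⁻ y, f x y ∂ν) ^ 2 ∂μ ≤ (∫⁻ y, (∫⁻ x, f x y ^ 2 ∂μ) ^ (1/2 : ℝ) ∂ν) ^ 2 := by
  set N : Y → ℝ≥0∞ := fun y => (∫⁻ x, f x y ^ 2 ∂μ) ^ (1/2 : ℝ)
  have hN : Measurable N := (hf.pow_const 2).lintegral_prod_left'.pow_const _
  have cauchy_schwarz (y y' : Y) : ∫⁻ x, f x y * f x y' ∂μ ≤ N y * N y' := by
    simpa [N] using ENNReal.lintegral_mul_le_Lp_mul_Lq μ Real.HolderConjugate.two_two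
      (hf.of_uncurry_right (y := y)).aemeasurable (hf.of_uncurry_right (y := y')).aemeasurable
  calc ∫⁻ x, (∫⁻ y, f x y ∂ν) ^ 2 ∂μ
      = ∫⁻ x, ∫⁻ y, ∫⁻ y', f x y * f x y' ∂ν ∂ν ∂μ := by
        refine lintegral_congr fun x => ?_
        rw [sq, lintegral_lintegral_mul hf.of_uncurry_left.aemeasurable
          hf.of_uncurry_left.aemeasurable]
    _ = ∫⁻ y, ∫⁻ y', ∫⁻ x, f x y * f x y' ∂μ ∂ν ∂ν := by
        rw [lintegral_lintegral_swap (by fun_prop)]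
        exact lintegral_congr fun y => lintegral_lintegral_swap (by fun_prop)
    _ ≤ ∫⁻ y, ∫⁻ y', N y * N y' ∂ν ∂ν := by
        gcongr with y y'
        exact cauchy_schwarz y y'
    _ = (∫⁻ y, N y ∂ν) ^ 2 := by
        rw [sq, lintegral_lintegral_mul hN.aemeasurable hN.aemeasurable]

theorem minkowski_lintegral_two {f : X → Y → ℝ≥0∞} (hf : Measurable (uncurry f)) :
    (∫⁻ x, (∫⁻ y, f x y ∂ν) ^ (2 : ℝ) ∂μ) ^ (1/2 : ℝ)
      ≤ ∫⁻ y, (∫⁻ x, f x y ^ (2 : ℝ) ∂μ) ^ (1/2 : ℝ) ∂ν := by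
  simp only [ENNReal.rpow_two]
  calc (∫⁻ x, (∫⁻ y, f x y ∂ν) ^ 2 ∂μ) ^ (1/2 : ℝ)
      ≤ ((∫⁻ y, (∫⁻ x, f x y ^ 2 ∂μ) ^ (1/2 : ℝ) ∂ν) ^ 2) ^ (1/2 : ℝ) :=
        ENNReal.rpow_le_rpow (minkowski_lintegral_sq hf) (by norm_num)
    _ = _ := by rw [← ENNReal.rpow_natCast, ← ENNReal.rpow_mul]; norm_num

end Minkowski

theorem setLIntegral_Ioo_zero_eq_ofReal_mul {y : ℝ} (hy : 0 < y) (g : ℝ → ℝ≥0∞) :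
    ∫⁻ z in Ioo 0 y, g z = ENNReal.ofReal y * ∫⁻ r in Ioo 0 1, g (y * r) := by
  have himage : (y * ·) '' Ioo 0 1 = Ioo 0 y := by
    rw [image_mul_left_Ioo hy]; norm_num
  rw [← himage, lintegral_image_eq_lintegral_abs_deriv_mul measurableSet_Ioo
    (fun r _ => by simpa using ((hasDerivAt_id r).const_mul y).hasDerivWithinAt)
    (mul_right_injective₀ hy.ne').injOn, abs_of_pos hy,
    ← lintegral_const_mul' _ _ ofReal_ne_top]

theorem setLIntegral_Ioo_zero_one_comp_mul_left {r : ℝ} (hr : 0 < r) (g : ℝ → ℝ≥0∞) :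
    ∫⁻ y in Ioo 0 1, g (r * y) = (ENNReal.ofReal r)⁻¹ * ∫⁻ z in Ioo 0 r, g z := by
  rw [setLIntegral_Ioo_zero_eq_ofReal_mul hr, ← mul_assoc,
    ENNReal.inv_mul_cancel (by simpa using hr) ofReal_ne_top, one_mul]

/-- The integrand is the norm of that of the complex Beta integral `B(a + 1, b + 1)`. -/
theorem lintegral_rpow_mul_one_sub_rpow_lt_top {a b : ℝ} (ha : -1 < a) (hb : -1 < b) :
    ∫⁻ r in Ioo 0 1, ENNReal.ofReal (r ^ a * (1 - r) ^ b) < ⊤ := by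
  have hbeta : IntegrableOn (fun r : ℝ => (r : ℂ) ^ (a : ℂ) * (1 - (r : ℂ)) ^ (b : ℂ))
      (Ioc 0 1) := by
    simpa using (Complex.betaIntegral_convergent (u := a + 1) (v := b + 1)
      (by simp; linarith) (by simp; linarith)).1
  refine Integrable.lintegral_lt_top
    ((IntegrableOn.mono_set hbeta.norm Ioo_subset_Ioc_self).congr_fun (fun r hr => ?_)
      measurableSet_Ioo)
  have h1r : 0 < 1 - r := sub_pos.2 hr.2
  dsimp only
  rw [norm_mul, show (1 : ℂ) - r = ((1 - r : ℝ) : ℂ) by push_cast; ring,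
    Complex.norm_cpow_eq_rpow_re_of_pos hr.1, Complex.norm_cpow_eq_rpow_re_of_pos h1r]
  simp

section FractionalKernel

variable {α γ : ℝ}

theorem setLIntegral_fractional_kernel_eq {y : ℝ} (hy : 0 < y) (F : ℝ → ℝ) :
    ∫⁻ z in Ioo 0 y, ENNReal.ofReal ((z / y) ^ (α + 1/2) * (y - z) ^ γ * |F z|)
      = ∫⁻ r in Ioo 0 1, ENNReal.ofReal (r ^ (α + 1/2) * (1 - r) ^ γ) *
          ENNReal.ofReal (y ^ (γ + 1) * |F (y * r)|) := by
  rw [setLIntegral_Ioo_zero_eq_ofReal_mul hy, ← lintegral_const_mul' _ _ ofReal_ne_top]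
  refine setLIntegral_congr_fun measurableSet_Ioo fun r ⟨hr0, hr1⟩ => ?_
  have h1r : 0 ≤ 1 - r := by linarith
  rw [← ofReal_mul hy.le, ← ofReal_mul (by positivity), mul_div_cancel_left₀ _ hy.ne',
    show y - y * r = y * (1 - r) by ring, Real.mul_rpow hy.le h1r, Real.rpow_add_one hy.ne']
  ring_nf

theorem setLIntegral_weighted_dilate_sq_le (hγ : -1 < γ) {r : ℝ} (hr : 0 < r) (F : ℝ → ℝ) :
    ∫⁻ y in Ioo 0 1, ENNReal.ofReal (y ^ (γ + 1) * |F (y * r)|) ^ (2 : ℝ)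
      ≤ (ENNReal.ofReal r)⁻¹ * ∫⁻ z in Ioi 0, ENNReal.ofReal (F z ^ 2) := by
  calc ∫⁻ y in Ioo 0 1, ENNReal.ofReal (y ^ (γ + 1) * |F (y * r)|) ^ (2 : ℝ)
      ≤ ∫⁻ y in Ioo 0 1, ENNReal.ofReal (F (r * y) ^ 2) := by
        refine setLIntegral_mono' measurableSet_Ioo fun y ⟨hy0, hy1⟩ => ?_
        have hweight : y ^ (γ + 1) ≤ 1 := Real.rpow_le_one hy0.le hy1.le (by linarith)
        rw [ofReal_rpow_of_nonneg (by positivity) zero_le_two, Real.rpow_two, mul_pow, sq_abs,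
          mul_comm y r]
        exact ofReal_le_ofReal
          (mul_le_of_le_one_left (sq_nonneg _) (pow_le_one₀ (by positivity) hweight))
    _ = (ENNReal.ofReal r)⁻¹ * ∫⁻ z in Ioo 0 r, ENNReal.ofReal (F z ^ 2) :=
        setLIntegral_Ioo_zero_one_comp_mul_left hr fun z => ENNReal.ofReal (F z ^ 2)
    _ ≤ (ENNReal.ofReal r)⁻¹ * ∫⁻ z in Ioi 0, ENNReal.ofReal (F z ^ 2) := by
        gcongr
        exact Ioo_subset_Ioi_self

theorem fractional_kernel_slice_norm_le (hγ : -1 < γ) {r : ℝ} (hr : r ∈ Ioo 0 1) (F : ℝ → ℝ) :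
    (∫⁻ y in Ioo 0 1, (ENNReal.ofReal (r ^ (α + 1/2) * (1 - r) ^ γ) *
        ENNReal.ofReal (y ^ (γ + 1) * |F (y * r)|)) ^ (2 : ℝ)) ^ (1/2 : ℝ)
      ≤ ENNReal.ofReal (r ^ α * (1 - r) ^ γ) *
        (∫⁻ z in Ioi 0, ENNReal.ofReal (F z ^ 2)) ^ (1/2 : ℝ) := by
  obtain ⟨hr0, hr1⟩ := hr
  have h1r : 0 < 1 - r := by linarith
  set k := ENNReal.ofReal (r ^ (α + 1/2) * (1 - r) ^ γ)
  have hscale : k * ((ENNReal.ofReal r)⁻¹) ^ (1/2 : ℝ) = ENNReal.ofReal (r ^ α * (1 - r) ^ γ) := by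
    rw [← ofReal_inv_of_pos hr0, ofReal_rpow_of_pos (inv_pos.2 hr0), ← ofReal_mul (by positivity),
      Real.inv_rpow hr0.le, Real.rpow_add hr0]
    field_simp
  have hk : (k ^ (2 : ℝ)) ^ (1/2 : ℝ) = k := by rw [← ENNReal.rpow_mul]; norm_num
  calc (∫⁻ y in Ioo 0 1, (k * ENNReal.ofReal (y ^ (γ + 1) * |F (y * r)|)) ^ (2 : ℝ)) ^ (1/2 : ℝ)
      = (k ^ (2 : ℝ) * ∫⁻ y in Ioo 0 1, ENNReal.ofReal (y ^ (γ + 1) * |F (y * r)|) ^ (2 : ℝ))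
          ^ (1/2 : ℝ) := by
        simp only [mul_rpow_of_nonneg _ _ zero_le_two]
        rw [lintegral_const_mul' _ _ (rpow_ne_top_of_nonneg zero_le_two ofReal_ne_top)]
    _ ≤ (k ^ (2 : ℝ) * ((ENNReal.ofReal r)⁻¹ * ∫⁻ z in Ioi 0, ENNReal.ofReal (F z ^ 2)))
          ^ (1/2 : ℝ) := by
        gcongr
        exact setLIntegral_weighted_dilate_sq_le hγ hr0 F
    _ = ENNReal.ofReal (r ^ α * (1 - r) ^ γ) *
          (∫⁻ z in Ioi 0, ENNReal.ofReal (F z ^ 2)) ^ (1/2 : ℝ) := by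
        rw [← hscale, ← mul_assoc, mul_rpow_of_nonneg _ _ (by norm_num),
          mul_rpow_of_nonneg _ _ (by norm_num), hk]

end FractionalKernel

theorem stmt_14_general (α γ : ℝ) (hα : -1 < α) (hγ₁ : -1 < γ) :
    ∃ C : ℝ, 0 < C ∧ ∀ F : ℝ → ℝ, Measurable F →
      (∫⁻ y in Set.Ioo (0:ℝ) 1,
        (∫⁻ z in Set.Ioo (0:ℝ) y,
          ENNReal.ofReal ((z / y) ^ (α + 1/2) * (y - z) ^ γ * |F z|)) ^ (2:ℝ)) ^ (1/2 : ℝ)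
      ≤ ENNReal.ofReal C *
        (∫⁻ z in Set.Ioi (0:ℝ), ENNReal.ofReal (F z ^ 2)) ^ (1/2 : ℝ) := by
  set B := ∫⁻ r in Ioo 0 1, ENNReal.ofReal (r ^ α * (1 - r) ^ γ)
  have hB : B ≠ ⊤ := (lintegral_rpow_mul_one_sub_rpow_lt_top hα hγ₁).ne
  refine ⟨B.toReal + 1, by positivity, fun F hF => ?_⟩
  set J := ∫⁻ z in Ioi 0, ENNReal.ofReal (F z ^ 2)
  calc _ = (∫⁻ y in Ioo 0 1, (∫⁻ r in Ioo 0 1, ENNReal.ofReal (r ^ (α + 1/2) * (1 - r) ^ γ) *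
              ENNReal.ofReal (y ^ (γ + 1) * |F (y * r)|)) ^ (2 : ℝ)) ^ (1/2 : ℝ) := by
        congr 1
        exact setLIntegral_congr_fun measurableSet_Ioo fun y hy => by
          rw [setLIntegral_fractional_kernel_eq hy.1]
    _ ≤ ∫⁻ r in Ioo 0 1, (∫⁻ y in Ioo 0 1, (ENNReal.ofReal (r ^ (α + 1/2) * (1 - r) ^ γ) *
              ENNReal.ofReal (y ^ (γ + 1) * |F (y * r)|)) ^ (2 : ℝ)) ^ (1/2 : ℝ) :=
        minkowski_lintegral_two (by fun_prop)
    _ ≤ ∫⁻ r in Ioo 0 1, ENNReal.ofReal (r ^ α * (1 - r) ^ γ) * J ^ (1/2 : ℝ) :=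
        setLIntegral_mono' measurableSet_Ioo fun r hr => fractional_kernel_slice_norm_le hγ₁ hr F
    _ = B * J ^ (1/2 : ℝ) := lintegral_mul_const _ (by fun_prop)
    _ ≤ ENNReal.ofReal (B.toReal + 1) * J ^ (1/2 : ℝ) := by
        gcongr
        rw [← ofReal_toReal hB]
        exact ofReal_le_ofReal (by simp)

theorem stmt_14 (α γ : ℝ) (hα : -1 < α) (hγ₁ : -1 < γ) (hγ₂ : γ < 0) :
    ∃ C : ℝ, 0 < C ∧ ∀ F : ℝ → ℝ, Measurable F →
      (∫⁻ y in Set.Ioo (0:ℝ) 1,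
        (∫⁻ z in Set.Ioo (0:ℝ) y,
          ENNReal.ofReal ((z / y) ^ (α + 1/2) * (y - z) ^ γ * |F z|)) ^ (2:ℝ)) ^ (1/2 : ℝ)
      ≤ ENNReal.ofReal C *
        (∫⁻ z in Set.Ioi (0:ℝ), ENNReal.ofReal (F z ^ 2)) ^ (1/2 : ℝ) :=
  stmt_14_general α γ hα hγ₁
end
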